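/- arXiv:2402.14703 — 9 statements merged into one kernel-verified Lean document; each statement's English description precedes it below -/
import Mathlib

section
/- In a finite-horizon POMDP with horizon H, memoryless evaluation policy π_e and memoryless behavior policy π_b (with π_b(a|o) > 0 for all o, a), for any function V on futures (with the convention V(f_{H+1}) = 0) it holds that J(π_e) − E_{π_b}[V(f_1)] = Σ_{h=1}^H E_{s_h ∼ d^{π_e}_h}[(B^S V)(s_h)], where (B^S V)(s_h) := E[r_h + V(f_{h+1}) | s_h, with a_h ∼ π_e and a_{h+1:H} ∼ π_b] − E_{π_b}[V(f_h) | s_h]. -/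
open Finset Matrix

noncomputable section

/-- A finite-horizon POMDP with horizon `H`, latent states `S`, observations `O`, actions `A`,
transition kernel `T`, emission distribution `Em`, reward `R`, and initial distribution `d1`. -/
structure POMDP (S O A : Type) where
  H : ℕ
  T : S → A → S → ℝ
  Em : S → O → ℝ
  R : O → A → ℝ
  d1 : S → ℝ

namespace POMDP

variable {S O A : Type} [Fintype S] [Fintype O] [Fintype A]
  [DecidableEq S] [DecidableEq O] [DecidableEq A]

/-- A trajectory: latent states `s_1, …, s_{H+1}`, observations `o_1, …, o_H`, and actions
`a_1, …, a_H` (0-indexed in Lean). -/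
abbrev Traj (P : POMDP S O A) : Type :=
  (Fin (P.H + 1) → S) × (Fin P.H → O) × (Fin P.H → A)

/-- Probability of a trajectory under a (possibly time-dependent) policy schedule. -/
def trajProb (P : POMDP S O A) (sched : ℕ → O → A → ℝ) (tr : P.Traj) : ℝ :=
  P.d1 (tr.1 0) *
    ∏ h : Fin P.H,
      (P.Em (tr.1 h.castSucc) (tr.2.1 h) * sched h (tr.2.1 h) (tr.2.2 h) *
        P.T (tr.1 h.castSucc) (tr.2.2 h) (tr.1 h.succ))

/-- Expectation of a trajectory functional under a policy schedule. -/
def expec (P : POMDP S O A) (sched : ℕ → O → A → ℝ) (g : P.Traj → ℝ) : ℝ :=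
  ∑ tr : P.Traj, P.trajProb sched tr * g tr

/-- The expected return `J(π)` of a memoryless policy `π`. -/
def J (P : POMDP S O A) (π : O → A → ℝ) : ℝ :=
  P.expec (fun _ => π) (fun tr => ∑ h : Fin P.H, P.R (tr.2.1 h) (tr.2.2 h))

/-- The marginal distribution `d^π_h` of the latent state `s_h`. -/
def stateDist (P : POMDP S O A) (sched : ℕ → O → A → ℝ) (h : Fin P.H) (s : S) : ℝ :=
  P.expec sched (fun tr => if tr.1 h.castSucc = s then 1 else 0)

/-- Conditional expectation of `g` given the event `E` (junk value `0` when `E` has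
probability zero, by real-division convention). -/
def condExp (P : POMDP S O A) (sched : ℕ → O → A → ℝ) (E : P.Traj → Prop)
    [DecidablePred E] (g : P.Traj → ℝ) : ℝ :=
  (∑ tr : P.Traj, if E tr then P.trajProb sched tr * g tr else 0) /
    (∑ tr : P.Traj, if E tr then P.trajProb sched tr else 0)

/-- The schedule playing `π_e` at step `h` and `π_b` at every other step. -/
def mix (πe πb : O → A → ℝ) (h : ℕ) : ℕ → O → A → ℝ :=
  fun k => if k = h then πe else πb

/-- `V` is a function of the future `f_h = (o_h, a_h, …, o_H, a_H)`: its value at step `h`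
depends only on the observations and actions from step `h` onwards. -/
def FutureDep (P : POMDP S O A) (V : ℕ → (Fin P.H → O) → (Fin P.H → A) → ℝ) : Prop :=
  ∀ (h : ℕ) (o o' : Fin P.H → O) (a a' : Fin P.H → A),
    (∀ k : Fin P.H, h ≤ (k : ℕ) → o k = o' k ∧ a k = a' k) → V h o a = V h o' a'

/-- `w` is a function of the history `τ_h = (o_1, a_1, …, o_{h-1}, a_{h-1})`: its value at
step `h` depends only on the observations and actions before step `h`. -/
def HistDep (P : POMDP S O A) (w : ℕ → (Fin P.H → O) → (Fin P.H → A) → ℝ) : Prop :=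
  ∀ (h : ℕ) (o o' : Fin P.H → O) (a a' : Fin P.H → A),
    (∀ k : Fin P.H, (k : ℕ) < h → o k = o' k ∧ a k = a' k) → w h o a = w h o' a'

/-- The latent-state Bellman residual `(B^S V)(s_h)`:
`E[r_h + V(f_{h+1}) | s_h, a_h ∼ π_e, a_{h+1:H} ∼ π_b] − E_{π_b}[V(f_h) | s_h]`. -/
def BS (P : POMDP S O A) (πe πb : O → A → ℝ)
    (V : ℕ → (Fin P.H → O) → (Fin P.H → A) → ℝ) (h : Fin P.H) (s : S) : ℝ :=
  P.condExp (mix πe πb h) (fun tr => tr.1 h.castSucc = s)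
      (fun tr => P.R (tr.2.1 h) (tr.2.2 h) + V ((h : ℕ) + 1) tr.2.1 tr.2.2) -
    P.condExp (fun _ => πb) (fun tr => tr.1 h.castSucc = s)
      (fun tr => V (h : ℕ) tr.2.1 tr.2.2)

/-- The history Bellman residual `(B^H V)(τ_h)`:
`E[r_h + V(f_{h+1}) | τ_h, a_h ∼ π_e, a_{h+1:H} ∼ π_b] − E_{π_b}[V(f_h) | τ_h]`. -/
def BH (P : POMDP S O A) (πe πb : O → A → ℝ)
    (V : ℕ → (Fin P.H → O) → (Fin P.H → A) → ℝ) (h : Fin P.H)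
    (o : Fin P.H → O) (a : Fin P.H → A) : ℝ :=
  P.condExp (mix πe πb h)
      (fun tr => ∀ k : Fin P.H, (k : ℕ) < (h : ℕ) → tr.2.1 k = o k ∧ tr.2.2 k = a k)
      (fun tr => P.R (tr.2.1 h) (tr.2.2 h) + V ((h : ℕ) + 1) tr.2.1 tr.2.2) -
    P.condExp (fun _ => πb)
      (fun tr => ∀ k : Fin P.H, (k : ℕ) < (h : ℕ) → tr.2.1 k = o k ∧ tr.2.2 k = a k)
      (fun tr => V (h : ℕ) tr.2.1 tr.2.2)

/-- Auxiliary recursion for the latent state value function, by remaining horizon. -/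
def latentValueAux (P : POMDP S O A) (π : O → A → ℝ) : ℕ → S → ℝ
  | 0, _ => 0
  | k + 1, s =>
      ∑ o, P.Em s o * ∑ a, π o a *
        (P.R o a + ∑ s', P.T s a s' * latentValueAux P π k s')

/-- The latent state value function `V^π_S(s_h) = E_π[Σ_{h' ≥ h} r_{h'} | s_h]`. -/
def latentValue (P : POMDP S O A) (π : O → A → ℝ) (h : ℕ) (s : S) : ℝ :=
  latentValueAux P π (P.H - h) s

end POMDP

open POMDP

/-!
Let `switchAt πe πb m` play `πe` before step `m` and `πb` from step `m` on, and
`W m = E_{switchAt m}[V(f_m)]`. Then `W H = 0` and `W 0 = E_{πb}[V(f_1)]`, and since the reward at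
step `h` only sees the first `h + 1` steps, `E_{switchAt (h+1)}[r_h] = E_{πe}[r_h]`; so
`J(πe) - E_{πb}[V(f_1)]` telescopes into `Σ_h (E_{switchAt (h+1)}[r_h + V(f_{h+1})] - W h)`.
For each `h`, the law of `s_h` under both `switchAt (h+1)` and `switchAt h` is `d^{πe}_h`, and
given `s_h` the future under `switchAt (h+1)` (resp. `switchAt h`) is distributed as under the
schedule `mix πe πb h` (resp. `πb`), because the schedules agree from step `h` on (Markov property).
Hence the `h`-th summand is `E_{s_h ∼ d^{πe}_h}[(B^S V)(s_h)]`. Positivity of `πb` guarantees that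
the conditioning events of `B^S` are null only where `d^{πe}_h` vanishes.
-/

namespace POMDP

section Path

variable {S O A : Type}

abbrev Path (S O A : Type) (n : ℕ) : Type :=
  (Fin (n + 1) → S) × (Fin n → O) × (Fin n → A)

-- `trajProb` with the horizon and the initial law as parameters, so that paths can be peeled.
def pathProb (Em : S → O → ℝ) (T : S → A → S → ℝ) (n : ℕ) (d : S → ℝ)
    (σ : ℕ → O → A → ℝ) (tr : Path S O A n) : ℝ :=
  d (tr.1 0) * ∏ k : Fin n,
    (Em (tr.1 k.castSucc) (tr.2.1 k) * σ k (tr.2.1 k) (tr.2.2 k) *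
      T (tr.1 k.castSucc) (tr.2.2 k) (tr.1 k.succ))

lemma trajProb_eq_pathProb (P : POMDP S O A) : P.trajProb = pathProb P.Em P.T P.H P.d1 :=
  rfl

def Path.consEquiv (S O A : Type) (n : ℕ) :
    (S × O × A) × Path S O A n ≃ Path S O A (n + 1) where
  toFun p := (Fin.cons p.1.1 p.2.1, Fin.cons p.1.2.1 p.2.2.1, Fin.cons p.1.2.2 p.2.2.2)
  invFun tr := ((tr.1 0, tr.2.1 0, tr.2.2 0), (Fin.tail tr.1, Fin.tail tr.2.1, Fin.tail tr.2.2))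
  left_inv _ := by simp
  right_inv _ := by simp

def Path.EqUpTo {n : ℕ} (m : ℕ) (x y : Path S O A n) : Prop :=
  (∀ k : Fin (n + 1), (k : ℕ) ≤ m → x.1 k = y.1 k) ∧
    ∀ k : Fin n, (k : ℕ) < m → x.2.1 k = y.2.1 k ∧ x.2.2 k = y.2.2 k

def Path.EqFrom {n : ℕ} (m : ℕ) (x y : Path S O A n) : Prop :=
  ∀ k : Fin n, m ≤ (k : ℕ) → x.2.1 k = y.2.1 k ∧ x.2.2 k = y.2.2 k

lemma Path.eqUpTo_consEquiv {n m : ℕ} (p : S × O × A) {x y : Path S O A n}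
    (hxy : EqUpTo m x y) :
    EqUpTo (m + 1) (consEquiv S O A n (p, x)) (consEquiv S O A n (p, y)) := by
  refine ⟨fun k hk => ?_, fun k hk => ?_⟩ <;> cases k using Fin.cases
  · rfl
  · exact hxy.1 _ (by simpa using hk)
  · exact ⟨rfl, rfl⟩
  · exact hxy.2 _ (by simpa using hk)

def Path.splice {n : ℕ} (m : ℕ) (x y : Path S O A n) : Path S O A n :=
  (fun k => if (k : ℕ) ≤ m then x.1 k else y.1 k,
    fun k => if (k : ℕ) < m then x.2.1 k else y.2.1 k,
    fun k => if (k : ℕ) < m then x.2.2 k else y.2.2 k)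

lemma Path.splice_splice {n : ℕ} (m : ℕ) (x y : Path S O A n) :
    splice m (splice m x y) (splice m y x) = x := by
  ext k <;> by_cases hk : (k : ℕ) ≤ m <;> by_cases hk' : (k : ℕ) < m <;> simp [splice, hk, hk']

lemma Path.eqFrom_splice {n : ℕ} (m : ℕ) (x y : Path S O A n) : EqFrom m (splice m x y) y :=
  fun _ hk => by simp [splice, hk.not_gt]

variable (Em : S → O → ℝ) (T : S → A → S → ℝ)

lemma pathProb_consEquiv (n : ℕ) (d : S → ℝ) (σ : ℕ → O → A → ℝ) (s : S) (o : O) (a : A)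
    (tr : Path S O A n) :
    pathProb Em T (n + 1) d σ (Path.consEquiv S O A n ((s, o, a), tr)) =
      d s * Em s o * σ 0 o a * pathProb Em T n (T s a) (fun k => σ (k + 1)) tr := by
  simp only [pathProb, Path.consEquiv, Equiv.coe_fn_mk, Fin.prod_univ_succ, Fin.castSucc_zero,
    Fin.val_zero, Fin.val_succ, ← Fin.succ_castSucc, Fin.cons_zero, Fin.cons_succ]
  ring

lemma pathProb_splice_mul {n : ℕ} (d : S → ℝ) {σ₁ σ₂ : ℕ → O → A → ℝ} (h : Fin n)
    (hσ : ∀ k, (h : ℕ) ≤ k → σ₁ k = σ₂ k) {x y : Path S O A n}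
    (hxy : x.1 h.castSucc = y.1 h.castSucc) :
    pathProb Em T n d σ₁ (Path.splice h x y) * pathProb Em T n d σ₂ (Path.splice h y x) =
      pathProb Em T n d σ₁ x * pathProb Em T n d σ₂ y := by
  simp only [pathProb]
  rw [mul_mul_mul_comm, ← prod_mul_distrib, mul_mul_mul_comm _ (∏ _, _), ← prod_mul_distrib]
  congr 1
  refine prod_congr rfl fun k _ => ?_
  rcases lt_or_ge k h with hk | hk
  · simp [Path.splice, hk, hk.le, Nat.succ_le_of_lt hk]
  · have hstate : ∀ {u v : Path S O A n}, u.1 h.castSucc = v.1 h.castSucc →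
        (Path.splice h u v).1 k.castSucc = v.1 k.castSucc := by
      intro u v huv
      rcases hk.eq_or_lt with rfl | hkh
      · simpa [Path.splice] using huv
      · simp [Path.splice, hkh.not_ge]
    rw [hstate hxy, hstate hxy.symm, hσ k hk]
    simp only [Path.splice, Fin.val_succ, Fin.val_fin_lt, hk.not_gt,
      (Nat.lt_succ_of_le (Fin.le_def.mp hk)).not_ge, if_false]
    ring

variable [Fintype S] [Fintype O] [Fintype A]

lemma sum_pathProb_succ (n : ℕ) (d : S → ℝ) (σ : ℕ → O → A → ℝ)
    (g : Path S O A (n + 1) → ℝ) :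
    ∑ tr, pathProb Em T (n + 1) d σ tr * g tr =
      ∑ s, ∑ o, ∑ a, d s * Em s o * σ 0 o a *
        ∑ tr, pathProb Em T n (T s a) (fun k => σ (k + 1)) tr *
          g (Path.consEquiv S O A n ((s, o, a), tr)) := by
  rw [← (Path.consEquiv S O A n).sum_comp]
  simp only [Fintype.sum_prod_type, pathProb_consEquiv, mul_sum, mul_assoc]

variable {Em T}

lemma sum_pathProb (hEm : ∀ s, ∑ o, Em s o = 1) (hT : ∀ s a, ∑ s', T s a s' = 1) (n : ℕ)
    (d : S → ℝ) {σ : ℕ → O → A → ℝ} (hσ : ∀ k o, ∑ a, σ k o a = 1) :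
    ∑ tr, pathProb Em T n d σ tr = ∑ s, d s := by
  induction n generalizing d σ with
  | zero =>
    simpa [pathProb, Fintype.sum_prod_type] using (Equiv.funUnique (Fin 1) S).sum_comp d
  | succ n ih =>
    simpa [ih, hσ, hT, hEm, ← mul_sum, ← sum_mul] using sum_pathProb_succ Em T n d σ 1

lemma sum_pathProb_mul_comp_initial (hEm : ∀ s, ∑ o, Em s o = 1)
    (hT : ∀ s a, ∑ s', T s a s' = 1) (n : ℕ) (d : S → ℝ) {σ : ℕ → O → A → ℝ}
    (hσ : ∀ k o, ∑ a, σ k o a = 1) (w : S → ℝ) :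
    ∑ tr, pathProb Em T n d σ tr * w (tr.1 0) = ∑ s, d s * w s := by
  rw [← sum_pathProb hEm hT n _ hσ]
  exact sum_congr rfl fun tr _ => by simp only [pathProb]; ring

theorem sum_pathProb_mul_eq_of_eqOn_prefix (hEm : ∀ s, ∑ o, Em s o = 1)
    (hT : ∀ s a, ∑ s', T s a s' = 1) (m : ℕ) {n : ℕ} (d : S → ℝ) {σ₁ σ₂ : ℕ → O → A → ℝ}
    (hσ₁ : ∀ k o, ∑ a, σ₁ k o a = 1) (hσ₂ : ∀ k o, ∑ a, σ₂ k o a = 1)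
    (hσ : ∀ k < m, σ₁ k = σ₂ k) (g : Path S O A n → ℝ)
    (hg : ∀ x y, Path.EqUpTo m x y → g x = g y) :
    ∑ tr, pathProb Em T n d σ₁ tr * g tr = ∑ tr, pathProb Em T n d σ₂ tr * g tr := by
  induction m generalizing n d σ₁ σ₂ with
  | zero =>
    cases isEmpty_or_nonempty (Path S O A n) with
    | inl _ => simp
    | inr hne =>
      obtain ⟨tr₀⟩ := hne
      obtain ⟨w, hw⟩ : ∃ w : S → ℝ, ∀ tr, g tr = w (tr.1 0) :=
        ⟨fun s => g (Function.update tr₀.1 0 s, tr₀.2), fun tr => hg _ _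
          ⟨fun k hk => by obtain rfl : k = 0 := Fin.ext (Nat.le_zero.mp hk); simp, by simp⟩⟩
      simp only [hw, sum_pathProb_mul_comp_initial hEm hT n d hσ₁,
        sum_pathProb_mul_comp_initial hEm hT n d hσ₂]
  | succ m ih =>
    cases n with
    | zero => simp [pathProb]
    | succ n =>
      rw [sum_pathProb_succ, sum_pathProb_succ, hσ 0 m.succ_pos]
      refine sum_congr rfl fun s _ => sum_congr rfl fun o _ => sum_congr rfl fun a _ => ?_
      congr 1
      exact ih _ (fun k o => hσ₁ (k + 1) o) (fun k o => hσ₂ (k + 1) o)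
        (fun k hk => hσ (k + 1) (by omega)) _
        fun x y hxy => hg _ _ (Path.eqUpTo_consEquiv _ hxy)

end Path

section Trajectories

variable {S O A : Type} (P : POMDP S O A)

lemma trajProb_nonneg (hEm : ∀ s o, 0 ≤ P.Em s o) (hT : ∀ s a s', 0 ≤ P.T s a s')
    (hd1 : ∀ s, 0 ≤ P.d1 s) {σ : ℕ → O → A → ℝ} (hσ : ∀ k o a, 0 ≤ σ k o a) (tr : P.Traj) :
    0 ≤ P.trajProb σ tr :=
  mul_nonneg (hd1 _) <| prod_nonneg fun _ _ =>
    mul_nonneg (mul_nonneg (hEm _ _) (hσ _ _ _)) (hT _ _ _)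

lemma trajProb_eq_zero_of_dom {σ₁ σ₂ : ℕ → O → A → ℝ}
    (hdom : ∀ k o a, σ₂ k o a = 0 → σ₁ k o a = 0) {tr : P.Traj} (h0 : P.trajProb σ₂ tr = 0) :
    P.trajProb σ₁ tr = 0 := by
  simp only [trajProb, mul_eq_zero, prod_eq_zero_iff, mem_univ, true_and] at h0 ⊢
  obtain h0 | ⟨k, (hEm | hσ) | hT⟩ := h0
  exacts [.inl h0, .inr ⟨k, .inl (.inl hEm)⟩, .inr ⟨k, .inl (.inr (hdom _ _ _ hσ))⟩,
    .inr ⟨k, .inr hT⟩]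

variable [Fintype S] [Fintype O] [Fintype A]

lemma expec_add (σ : ℕ → O → A → ℝ) (f g : P.Traj → ℝ) :
    P.expec σ (fun tr => f tr + g tr) = P.expec σ f + P.expec σ g := by
  simp only [expec, mul_add, sum_add_distrib]

lemma sum_expec_ite_eq {β : Type} [Fintype β] [DecidableEq β] (σ : ℕ → O → A → ℝ)
    (X : P.Traj → β) (G : P.Traj → ℝ) :
    ∑ b, P.expec σ (fun tr => if X tr = b then G tr else 0) = P.expec σ G := by
  simp only [expec, mul_ite, mul_zero]
  rw [sum_comm]
  simp

lemma J_eq_sum_expec (π : O → A → ℝ) :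
    P.J π = ∑ h : Fin P.H, P.expec (fun _ => π) (fun tr => P.R (tr.2.1 h) (tr.2.2 h)) := by
  simp only [J, expec, mul_sum]
  exact sum_comm

variable [DecidableEq S]

/-- The Markov property at the latent state `s_h`, proved by swapping the futures of pairs of
trajectories that meet at `s_h`. -/
theorem expec_ite_mul_expec_ite_comm (h : Fin P.H) (s : S) {σ₁ σ₂ : ℕ → O → A → ℝ}
    (hσ : ∀ k, (h : ℕ) ≤ k → σ₁ k = σ₂ k) {G K : P.Traj → ℝ}
    (hG : ∀ x y, Path.EqFrom h x y → G x = G y) (hK : ∀ x y, Path.EqFrom h x y → K x = K y) :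
    P.expec σ₁ (fun tr => if tr.1 h.castSucc = s then G tr else 0) *
        P.expec σ₂ (fun tr => if tr.1 h.castSucc = s then K tr else 0) =
      P.expec σ₁ (fun tr => if tr.1 h.castSucc = s then K tr else 0) *
        P.expec σ₂ (fun tr => if tr.1 h.castSucc = s then G tr else 0) := by
  let swap : P.Traj × P.Traj → P.Traj × P.Traj :=
    fun z => (Path.splice h z.1 z.2, Path.splice h z.2 z.1)
  have hswap : Function.Involutive swap := fun z =>
    Prod.ext (Path.splice_splice _ z.1 z.2) (Path.splice_splice _ z.2 z.1)
  simp only [expec, sum_mul_sum, ← Fintype.sum_prod_type']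
  rw [← Equiv.sum_comp hswap.toPerm]
  refine sum_congr rfl fun ⟨x, y⟩ _ => ?_
  have hstate : ∀ u v : P.Traj, (Path.splice h u v).1 h.castSucc = u.1 h.castSucc := by
    simp [Path.splice]
  simp only [Function.Involutive.coe_toPerm, swap, hstate]
  by_cases hx : x.1 h.castSucc = s
  · by_cases hy : y.1 h.castSucc = s
    · simp only [hx, hy, if_true, hG _ y (Path.eqFrom_splice _ x y),
        hK _ x (Path.eqFrom_splice _ y x), trajProb_eq_pathProb]
      linear_combination (G y * K x) * pathProb_splice_mul P.Em P.T P.d1 h hσ (hx.trans hy.symm)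
    · simp [hy]
  · simp [hx]

lemma trajProb_eq_zero_of_stateDist_eq_zero (hEm : ∀ s o, 0 ≤ P.Em s o)
    (hT : ∀ s a s', 0 ≤ P.T s a s') (hd1 : ∀ s, 0 ≤ P.d1 s) {σ : ℕ → O → A → ℝ}
    (hσ : ∀ k o a, 0 ≤ σ k o a) {h : Fin P.H} {s : S} (h0 : P.stateDist σ h s = 0)
    {tr : P.Traj} (hs : tr.1 h.castSucc = s) : P.trajProb σ tr = 0 := by
  have hterm := (sum_eq_zero_iff_of_nonneg fun tr _ => mul_nonneg
    (P.trajProb_nonneg hEm hT hd1 hσ tr) (by split_ifs <;> norm_num)).mp h0 tr (mem_univ _)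
  simpa [hs] using hterm

variable {P} in
theorem stateDist_mul_condExp (hEm : ∀ s o, 0 ≤ P.Em s o) (hT : ∀ s a s', 0 ≤ P.T s a s')
    (hd1 : ∀ s, 0 ≤ P.d1 s) (h : Fin P.H) (s : S) {σ₁ σ₂ : ℕ → O → A → ℝ}
    (hσ : ∀ k, (h : ℕ) ≤ k → σ₁ k = σ₂ k) (hσ₂ : ∀ k o a, 0 ≤ σ₂ k o a)
    (hpos : ∀ k < (h : ℕ), ∀ o a, 0 < σ₂ k o a) {G : P.Traj → ℝ}
    (hG : ∀ x y, Path.EqFrom h x y → G x = G y) :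
    P.stateDist σ₁ h s * P.condExp σ₂ (fun tr => tr.1 h.castSucc = s) G =
      P.expec σ₁ (fun tr => if tr.1 h.castSucc = s then G tr else 0) := by
  have hcond : P.condExp σ₂ (fun tr => tr.1 h.castSucc = s) G =
      P.expec σ₂ (fun tr => if tr.1 h.castSucc = s then G tr else 0) / P.stateDist σ₂ h s := by
    simp only [condExp, expec, stateDist, mul_ite, mul_one, mul_zero]
  rw [hcond]
  by_cases h0 : P.stateDist σ₂ h s = 0
  · have hdom : ∀ k o a, σ₂ k o a = 0 → σ₁ k o a = 0 := fun k o a hk => by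
      rcases lt_or_ge k h with hkh | hkh
      · exact absurd hk (hpos k hkh o a).ne'
      · rwa [hσ k hkh]
    rw [h0, div_zero, mul_zero, eq_comm]
    refine sum_eq_zero fun tr _ => ?_
    dsimp only
    split_ifs with hs
    · rw [P.trajProb_eq_zero_of_dom hdom (P.trajProb_eq_zero_of_stateDist_eq_zero
        hEm hT hd1 hσ₂ h0 hs), zero_mul]
    · rw [mul_zero]
  · have hex : P.expec σ₁ (fun tr => if tr.1 h.castSucc = s then G tr else 0) *
        P.stateDist σ₂ h s =
          P.stateDist σ₁ h s * P.expec σ₂ (fun tr => if tr.1 h.castSucc = s then G tr else 0) :=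
      P.expec_ite_mul_expec_ite_comm h s hσ (K := fun _ => 1) hG fun _ _ _ => rfl
    rw [mul_div_assoc', ← hex, mul_div_cancel_right₀ _ h0]

end Trajectories

def switchAt {O A : Type} (πe πb : O → A → ℝ) (m : ℕ) : ℕ → O → A → ℝ :=
  fun k => if k < m then πe else πb

lemma switchAt_zero {O A : Type} (πe πb : O → A → ℝ) : switchAt πe πb 0 = fun _ => πb :=
  funext fun k => if_neg k.not_lt_zero

lemma sum_switchAt {O A : Type} [Fintype A] {πe πb : O → A → ℝ} (hπe : ∀ o, ∑ a, πe o a = 1)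
    (hπb : ∀ o, ∑ a, πb o a = 1) (m k : ℕ) (o : O) :
    ∑ a, switchAt πe πb m k o a = 1 := by
  unfold switchAt
  split_ifs
  exacts [hπe o, hπb o]

section Switching

variable {S O A : Type} [Fintype S] [Fintype O] [Fintype A] {P : POMDP S O A}
  {πe πb : O → A → ℝ}

lemma expec_switchAt_reward (hEm : ∀ s, ∑ o, P.Em s o = 1) (hT : ∀ s a, ∑ s', P.T s a s' = 1)
    (hπe : ∀ o, ∑ a, πe o a = 1) (hπb : ∀ o, ∑ a, πb o a = 1) (h : Fin P.H) :
    P.expec (switchAt πe πb (h + 1)) (fun tr => P.R (tr.2.1 h) (tr.2.2 h)) =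
      P.expec (fun _ => πe) (fun tr => P.R (tr.2.1 h) (tr.2.2 h)) :=
  sum_pathProb_mul_eq_of_eqOn_prefix hEm hT (h + 1) P.d1 (sum_switchAt hπe hπb _)
    (fun _ => hπe) (fun _ hk => if_pos hk) _ fun x y hxy => by
      rw [(hxy.2 h (Nat.lt_succ_self _)).1, (hxy.2 h (Nat.lt_succ_self _)).2]

variable [DecidableEq S]

lemma stateDist_eq_switchAt (hEm : ∀ s, ∑ o, P.Em s o = 1) (hT : ∀ s a, ∑ s', P.T s a s' = 1)
    (hπe : ∀ o, ∑ a, πe o a = 1) (hπb : ∀ o, ∑ a, πb o a = 1) {h : Fin P.H} {m : ℕ}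
    (hm : (h : ℕ) ≤ m) : P.stateDist (fun _ => πe) h = P.stateDist (switchAt πe πb m) h :=
  funext fun _ => sum_pathProb_mul_eq_of_eqOn_prefix hEm hT m P.d1 (fun _ => hπe)
    (sum_switchAt hπe hπb _) (fun _ hk => (if_pos hk).symm) _ fun x y hxy => by
      rw [hxy.1 h.castSucc hm]

theorem sum_stateDist_mul_BS (hT : ∀ s a, (∀ s', 0 ≤ P.T s a s') ∧ ∑ s', P.T s a s' = 1)
    (hEm : ∀ s, (∀ o, 0 ≤ P.Em s o) ∧ ∑ o, P.Em s o = 1) (hd1 : ∀ s, 0 ≤ P.d1 s)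
    (hπe : ∀ o, (∀ a, 0 ≤ πe o a) ∧ ∑ a, πe o a = 1)
    (hπb : ∀ o, (∀ a, 0 < πb o a) ∧ ∑ a, πb o a = 1)
    {V : ℕ → (Fin P.H → O) → (Fin P.H → A) → ℝ} (hdep : P.FutureDep V) (h : Fin P.H) :
    ∑ s, P.stateDist (fun _ => πe) h s * P.BS πe πb V h s =
      P.expec (switchAt πe πb (h + 1))
          (fun tr => P.R (tr.2.1 h) (tr.2.2 h) + V (h + 1) tr.2.1 tr.2.2) -
        P.expec (switchAt πe πb h) (fun tr => V h tr.2.1 tr.2.2) := by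
  have hEm₀ s o := (hEm s).1 o
  have hT₀ s a s' := (hT s a).1 s'
  have hdist {m : ℕ} (hm : (h : ℕ) ≤ m) := stateDist_eq_switchAt (fun s => (hEm s).2)
    (fun s a => (hT s a).2) (fun o => (hπe o).2) (fun o => (hπb o).2) hm
  simp only [BS, mul_sub, sum_sub_distrib]
  congr 1
  · rw [hdist (Nat.le_succ _), ← P.sum_expec_ite_eq _ fun tr => tr.1 h.castSucc]
    refine sum_congr rfl fun s _ => stateDist_mul_condExp hEm₀ hT₀ hd1 h s (fun k hk => ?_)
      (fun k o a => ?_) (fun k hk o a => ?_) fun x y hxy => ?_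
    · rcases hk.eq_or_lt with rfl | hk
      · simp [switchAt, mix]
      · simp [switchAt, mix, hk.ne', Nat.not_lt.mpr hk]
    · unfold mix; split_ifs
      exacts [(hπe o).1 a, ((hπb o).1 a).le]
    · simpa [mix, hk.ne] using (hπb o).1 a
    · rw [(hxy h le_rfl).1, (hxy h le_rfl).2, hdep _ _ _ _ _ fun k hk => hxy k (by omega)]
  · rw [hdist le_rfl, ← P.sum_expec_ite_eq _ fun tr => tr.1 h.castSucc]
    refine sum_congr rfl fun s _ => stateDist_mul_condExp hEm₀ hT₀ hd1 h s (fun k hk => ?_)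
      (fun k o a => ((hπb o).1 a).le) (fun k _ o a => (hπb o).1 a) fun x y => hdep h _ _ _ _
    simp [switchAt, Nat.not_lt.mpr hk]

end Switching

end POMDP

theorem stmt0_general
    (S O A : Type) [Fintype S] [Fintype O] [Fintype A]
    [DecidableEq S]
    (P : POMDP S O A)
    (hT : ∀ s a, (∀ s', 0 ≤ P.T s a s') ∧ ∑ s', P.T s a s' = 1)
    (hEm : ∀ s, (∀ o, 0 ≤ P.Em s o) ∧ ∑ o, P.Em s o = 1)
    (hd1 : (∀ s, 0 ≤ P.d1 s) ∧ ∑ s, P.d1 s = 1)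
    (πe πb : O → A → ℝ)
    (hπe : ∀ o, (∀ a, 0 ≤ πe o a) ∧ ∑ a, πe o a = 1)
    (hπb : ∀ o, (∀ a, 0 < πb o a) ∧ ∑ a, πb o a = 1)
    (V : ℕ → (Fin P.H → O) → (Fin P.H → A) → ℝ)
    (hdep : P.FutureDep V)
    (hconv : ∀ o a, V P.H o a = 0) :
    P.J πe - P.expec (fun _ => πb) (fun tr => V 0 tr.2.1 tr.2.2) =
      ∑ h : Fin P.H, ∑ s : S, P.stateDist (fun _ => πe) h s * P.BS πe πb V h s := by
  let W (m : ℕ) : ℝ := P.expec (switchAt πe πb m) (fun tr => V m tr.2.1 tr.2.2)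
  have hstep (h : Fin P.H) : ∑ s, P.stateDist (fun _ => πe) h s * P.BS πe πb V h s =
      P.expec (fun _ => πe) (fun tr => P.R (tr.2.1 h) (tr.2.2 h)) + (W (h + 1) - W h) := by
    rw [sum_stateDist_mul_BS hT hEm hd1.1 hπe hπb hdep h, expec_add,
      expec_switchAt_reward (fun s => (hEm s).2) (fun s a => (hT s a).2) (fun o => (hπe o).2)
        (fun o => (hπb o).2)]
    ring
  have hW_H : W P.H = 0 := by simp [W, expec, hconv]
  have hW_zero : W 0 = P.expec (fun _ => πb) (fun tr => V 0 tr.2.1 tr.2.2) := by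
    simp only [W, switchAt_zero]
  rw [sum_congr rfl fun h _ => hstep h, sum_add_distrib, ← J_eq_sum_expec,
    Fin.sum_univ_eq_sum_range (fun m => W (m + 1) - W m), sum_range_sub, hW_H, hW_zero]
  ring

/-- in a finite-horizon POMDP with memoryless policies `π_e` and `π_b`
(`π_b(a|o) > 0`), for any future-dependent function `V` (with the convention
`V(f_{H+1}) = 0`),
`J(π_e) − E_{π_b}[V(f_1)] = Σ_{h=1}^H E_{s_h ∼ d^{π_e}_h}[(B^S V)(s_h)]`. -/
theorem stmt0
    (S O A : Type) [Fintype S] [Fintype O] [Fintype A]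
    [DecidableEq S] [DecidableEq O] [DecidableEq A]
    (P : POMDP S O A)
    (hT : ∀ s a, (∀ s', 0 ≤ P.T s a s') ∧ ∑ s', P.T s a s' = 1)
    (hEm : ∀ s, (∀ o, 0 ≤ P.Em s o) ∧ ∑ o, P.Em s o = 1)
    (hd1 : (∀ s, 0 ≤ P.d1 s) ∧ ∑ s, P.d1 s = 1)
    (hR : ∀ o a, 0 ≤ P.R o a ∧ P.R o a ≤ 1)
    (πe πb : O → A → ℝ)
    (hπe : ∀ o, (∀ a, 0 ≤ πe o a) ∧ ∑ a, πe o a = 1)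
    (hπb : ∀ o, (∀ a, 0 < πb o a) ∧ ∑ a, πb o a = 1)
    (V : ℕ → (Fin P.H → O) → (Fin P.H → A) → ℝ)
    (hdep : P.FutureDep V)
    (hconv : ∀ o a, V P.H o a = 0) :
    P.J πe - P.expec (fun _ => πb) (fun tr => V 0 tr.2.1 tr.2.2) =
      ∑ h : Fin P.H, ∑ s : S, P.stateDist (fun _ => πe) h s * P.BS πe πb V h s :=
  stmt0_general S O A P hT hEm hd1 πe πb hπe hπb V hdep hconv
end
end

section
/- Let M be an S×F real matrix with nonnegative entries, each row summing to 1, no zero column, and such that every column of M has at most one nonzero entry (i.e., the future reveals the latent state). Then Σ_F = M Z^{-1} Mᵀ equals the S×S identity matrix, and for any v ∈ ℝ^S with ‖v‖_∞ ≤ H, the vector x = Z^{-1} Mᵀ Σ_F^{-1} v satisfies ‖x‖_∞ ≤ H. -/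
open Matrix

/-- The weighted outcome covariance matrix `Σ_F = M Z⁻¹ Mᵀ`, where
`Z = diag(1ᵀ M)` is the diagonal matrix of column sums of `M`. -/
noncomputable def SigmaF {S F : Type} [Fintype S] [Fintype F] [DecidableEq F]
    (M : Matrix S F ℝ) : Matrix S S ℝ :=
  M * Matrix.diagonal (fun f => (∑ s, M s f)⁻¹) * Mᵀ

/-- if each column of the nonnegative, row-stochastic matrix `M` has at most one
nonzero entry (the future reveals the latent state), then `Σ_F = M Z⁻¹ Mᵀ` is the identity
matrix, and for any `v` with `‖v‖_∞ ≤ H`, the vector `x = Z⁻¹ Mᵀ Σ_F⁻¹ v` satisfies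
`‖x‖_∞ ≤ H`. -/
theorem stmt4 (S F : Type) [Fintype S] [Fintype F] [DecidableEq S] [DecidableEq F]
    (M : Matrix S F ℝ)
    (hnn : ∀ s f, 0 ≤ M s f)
    (hrow : ∀ s, ∑ f, M s f = 1)
    (hcol : ∀ f, ∃ s, M s f ≠ 0)
    (hreveal : ∀ f s s', M s f ≠ 0 → M s' f ≠ 0 → s = s')
    (H : ℝ) (v : S → ℝ) (hv : ∀ s, |v s| ≤ H) :
    SigmaF M = 1 ∧
    ∀ f, |((Matrix.diagonal (fun f => (∑ s, M s f)⁻¹) * Mᵀ * (SigmaF M)⁻¹).mulVec v) f| ≤ H := by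
  have hZ : ∀ f s, M s f ≠ 0 → ∑ t, M t f = M s f := by
    intro f s hs
    refine Finset.sum_eq_single s (fun t _ hts => ?_) (fun h => absurd (Finset.mem_univ s) h)
    by_contra h
    exact hts (hreveal f t s h hs)
  have hSig : SigmaF M = 1 := by
    ext s s'
    simp only [SigmaF, Matrix.mul_apply, Matrix.diagonal_apply, Matrix.transpose_apply,
      Matrix.one_apply, mul_ite, ite_mul, mul_zero, zero_mul, Finset.sum_ite_eq,
      Finset.sum_ite_eq', Finset.mem_univ, if_true]
    by_cases hss : s = s'
    · subst hss
      simp only [if_pos rfl]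
      rw [← hrow s]
      refine Finset.sum_congr rfl (fun f _ => ?_)
      by_cases h : M s f = 0
      · simp [h]
      · rw [hZ f s h]
        field_simp
    · rw [if_neg hss]
      refine Finset.sum_eq_zero (fun f _ => ?_)
      by_cases h : M s f = 0
      · simp [h]
      · have h' : M s' f = 0 := by
          by_contra h'
          exact hss (hreveal f s s' h h')
        simp [h']
  refine ⟨hSig, fun f => ?_⟩
  rw [hSig, inv_one, Matrix.mul_one]
  obtain ⟨s0, hs0⟩ := hcol f
  have : ((Matrix.diagonal (fun f => (∑ s, M s f)⁻¹) * Mᵀ).mulVec v) f = v s0 := by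
    simp only [Matrix.mulVec, dotProduct, Matrix.mul_apply, Matrix.diagonal_apply,
      Matrix.transpose_apply, mul_ite, ite_mul, mul_zero, zero_mul, Finset.sum_ite_eq,
      Finset.sum_ite_eq', Finset.mem_univ, if_true]
    rw [Finset.sum_eq_single s0]
    · rw [hZ f s0 hs0]
      field_simp
    · intro t _ hts
      have : M t f = 0 := by
        by_contra h
        exact hts (hreveal f t s0 h hs0)
      simp [this]
    · intro h; exact absurd (Finset.mem_univ s0) h
  rw [this]
  exact hv s0
end

section
/- Let M be an S×F real matrix with nonnegative entries, each row summing to 1, and no zero column, with Z = diag(1ᵀM) and Σ_F = M Z^{-1} Mᵀ invertible. Let v ∈ ℝ^S and define x = Z^{-1} Mᵀ Σ_F^{-1} v. Then M x = v. Moreover: (1) if vᵀ Σ_F^{-1} v ≤ C_V (L2 outcome coverage) and every column u_f of M satisfies (u_f/Z_f)ᵀ Σ_F^{-1} (u_f/Z_f) ≤ C_U (Σ_F regularity), then ‖x‖_∞ ≤ sqrt(C_V · C_U); (2) under only the assumption vᵀ Σ_F^{-1} v ≤ C_V, the weighted norm satisfies ‖x‖_Z := sqrt(xᵀ Z x) ≤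 sqrt(C_V). -/
/-!
With `w = Σ_F⁻¹ v` one has `x = Z⁻¹ Mᵀ w`, so `M x = Σ_F w = v`. Each coordinate
`x_f = (u_f / Z_f)ᵀ Σ_F⁻¹ v` is a value of the bilinear form of the positive semidefinite
matrix `Σ_F⁻¹`, and Cauchy–Schwarz for that form gives the sup-norm bound. The weighted norm
is computed exactly: `xᵀ Z x = wᵀ M Z⁻¹ Mᵀ w = wᵀ Σ_F w = vᵀ Σ_F⁻¹ v`.
-/

open Matrix

/-- The minimum-`Z`-weighted-norm solution `x = Z⁻¹ Mᵀ Σ_F⁻¹ v`. -/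
noncomputable def minWNormSol {S F : Type} [Fintype S] [Fintype F] [DecidableEq S]
    [DecidableEq F] (M : Matrix S F ℝ) (v : S → ℝ) : F → ℝ :=
  (Matrix.diagonal (fun f => (∑ s, M s f)⁻¹) * Mᵀ * (SigmaF M)⁻¹).mulVec v

open scoped MatrixOrder in
theorem Matrix.PosSemidef.dotProduct_mulVec_sq_le {n : Type} [Fintype n] [DecidableEq n]
    {A : Matrix n n ℝ} (hA : A.PosSemidef) (x y : n → ℝ) :
    (x ⬝ᵥ A *ᵥ y) ^ 2 ≤ (x ⬝ᵥ A *ᵥ x) * (y ⬝ᵥ A *ᵥ y) := by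
  obtain ⟨B, rfl⟩ := CStarAlgebra.nonneg_iff_eq_star_mul_self.mp hA.nonneg
  have factor : ∀ a b : n → ℝ, a ⬝ᵥ (star B * B) *ᵥ b = B *ᵥ a ⬝ᵥ B *ᵥ b := fun a b => by
    rw [← mulVec_mulVec, dotProduct_mulVec, star_eq_conjTranspose,
      conjTranspose_eq_transpose_of_trivial, vecMul_transpose]
  rw [factor, factor, factor]
  simpa only [dotProduct, pow_two] using
    Finset.sum_mul_sq_le_sq_mul_sq Finset.univ (B *ᵥ x) (B *ᵥ y)

theorem posSemidef_SigmaF {S F : Type} [Fintype S] [Fintype F] [DecidableEq F]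
    (M : Matrix S F ℝ) (hnn : ∀ s f, 0 ≤ M s f) : (SigmaF M).PosSemidef := by
  have hZ : (diagonal fun f => (∑ s, M s f)⁻¹).PosSemidef :=
    posSemidef_diagonal_iff.mpr fun f => inv_nonneg.mpr (Finset.sum_nonneg fun s _ => hnn s f)
  simpa only [SigmaF, conjTranspose_eq_transpose_of_trivial] using
    hZ.mul_mul_conjTranspose_same M

section OutcomeMatrix

variable {S F : Type} [Fintype S] [Fintype F] [DecidableEq S] [DecidableEq F]
  (M : Matrix S F ℝ)

theorem mulVec_minWNormSol (hdet : IsUnit (SigmaF M).det) (v : S → ℝ) :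
    M *ᵥ minWNormSol M v = v := by
  rw [minWNormSol, mulVec_mulVec, ← Matrix.mul_assoc, ← Matrix.mul_assoc, ← SigmaF,
    mul_nonsing_inv _ hdet, one_mulVec]

theorem minWNormSol_apply (v : S → ℝ) (f : F) :
    minWNormSol M v f = (fun s => M s f / ∑ s', M s' f) ⬝ᵥ (SigmaF M)⁻¹ *ᵥ v := by
  rw [minWNormSol, ← mulVec_mulVec, ← mulVec_mulVec, mulVec_diagonal, mulVec, dotProduct,
    dotProduct, Finset.mul_sum]
  exact Finset.sum_congr rfl fun s _ => by simp only [transpose_apply]; ring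

theorem abs_minWNormSol_le (hnn : ∀ s f, 0 ≤ M s f) (v : S → ℝ) (f : F) :
    |minWNormSol M v f| ≤ Real.sqrt ((v ⬝ᵥ (SigmaF M)⁻¹ *ᵥ v) *
      ((fun s => M s f / ∑ s', M s' f) ⬝ᵥ
        (SigmaF M)⁻¹ *ᵥ (fun s => M s f / ∑ s', M s' f))) := by
  rw [← Real.sqrt_sq_eq_abs, minWNormSol_apply, mul_comm]
  exact Real.sqrt_le_sqrt ((posSemidef_SigmaF M hnn).inv.dotProduct_mulVec_sq_le _ _)

theorem sum_colSum_mul_minWNormSol_sq (hdet : IsUnit (SigmaF M).det) (v : S → ℝ) :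
    ∑ f, (∑ s, M s f) * minWNormSol M v f ^ 2 = v ⬝ᵥ (SigmaF M)⁻¹ *ᵥ v := by
  set w := (SigmaF M)⁻¹ *ᵥ v
  have hv : SigmaF M *ᵥ w = v := by
    rw [mulVec_mulVec, mul_nonsing_inv _ hdet, one_mulVec]
  have hx : minWNormSol M v = diagonal (fun f => (∑ s, M s f)⁻¹) *ᵥ (Mᵀ *ᵥ w) := by
    rw [minWNormSol, mulVec_mulVec, mulVec_mulVec]
  have hZ : ∀ (z a : ℝ), z * (z⁻¹ * a) ^ 2 = a * (z⁻¹ * a) := fun z a => by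
    rcases eq_or_ne z 0 with rfl | hz
    · simp
    · field_simp
  calc ∑ f, (∑ s, M s f) * minWNormSol M v f ^ 2
      = Mᵀ *ᵥ w ⬝ᵥ diagonal (fun f => (∑ s, M s f)⁻¹) *ᵥ (Mᵀ *ᵥ w) := by
        simp only [hx, mulVec_diagonal, dotProduct, hZ]
    _ = w ⬝ᵥ SigmaF M *ᵥ w := by
        rw [SigmaF, ← mulVec_mulVec, ← mulVec_mulVec, dotProduct_mulVec w M, mulVec_transpose]
    _ = v ⬝ᵥ w := by rw [hv, dotProduct_comm]

end OutcomeMatrix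

theorem stmt5_general (S F : Type) [Fintype S] [Fintype F] [DecidableEq S] [DecidableEq F]
    (M : Matrix S F ℝ)
    (hnn : ∀ s f, 0 ≤ M s f)
    (hdet : IsUnit (SigmaF M).det)
    (v : S → ℝ) (CV CU : ℝ) :
    M.mulVec (minWNormSol M v) = v ∧
    ((v ⬝ᵥ ((SigmaF M)⁻¹).mulVec v ≤ CV ∧
        ∀ f, (fun s => M s f / ∑ s', M s' f) ⬝ᵥ
            ((SigmaF M)⁻¹).mulVec (fun s => M s f / ∑ s', M s' f) ≤ CU) →
      ∀ f, |minWNormSol M v f| ≤ Real.sqrt (CV * CU)) ∧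
    (v ⬝ᵥ ((SigmaF M)⁻¹).mulVec v ≤ CV →
      Real.sqrt (∑ f, (∑ s, M s f) * minWNormSol M v f ^ 2) ≤ Real.sqrt CV) := by
  have hinv := (posSemidef_SigmaF M hnn).inv
  have hq : ∀ y, 0 ≤ y ⬝ᵥ (SigmaF M)⁻¹ *ᵥ y := fun y => by
    simpa using hinv.dotProduct_mulVec_nonneg y
  refine ⟨mulVec_minWNormSol M hdet v, fun ⟨hV, hU⟩ f => ?_, fun hV => ?_⟩
  · refine (abs_minWNormSol_le M hnn v f).trans (Real.sqrt_le_sqrt ?_)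
    exact mul_le_mul hV (hU f) (hq _) ((hq v).trans hV)
  · rw [sum_colSum_mul_minWNormSol_sq M hdet]
    exact Real.sqrt_le_sqrt hV

/-- with `Σ_F = M Z⁻¹ Mᵀ` invertible and `x = Z⁻¹ Mᵀ Σ_F⁻¹ v`, one has `M x = v`;
moreover (1) if `vᵀ Σ_F⁻¹ v ≤ C_V` and every normalized column satisfies
`(u_f/Z_f)ᵀ Σ_F⁻¹ (u_f/Z_f) ≤ C_U`, then `‖x‖_∞ ≤ sqrt (C_V C_U)`; and
(2) under `vᵀ Σ_F⁻¹ v ≤ C_V` alone, `‖x‖_Z = sqrt (xᵀ Z x) ≤ sqrt C_V`. -/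
theorem stmt5 (S F : Type) [Fintype S] [Fintype F] [DecidableEq S] [DecidableEq F]
    (M : Matrix S F ℝ)
    (hnn : ∀ s f, 0 ≤ M s f)
    (hrow : ∀ s, ∑ f, M s f = 1)
    (hcol : ∀ f, ∃ s, M s f ≠ 0)
    (hdet : IsUnit (SigmaF M).det)
    (v : S → ℝ) (CV CU : ℝ) :
    M.mulVec (minWNormSol M v) = v ∧
    ((v ⬝ᵥ ((SigmaF M)⁻¹).mulVec v ≤ CV ∧
        ∀ f, (fun s => M s f / ∑ s', M s' f) ⬝ᵥ
            ((SigmaF M)⁻¹).mulVec (fun s => M s f / ∑ s', M s' f) ≤ CU) →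
      ∀ f, |minWNormSol M v f| ≤ Real.sqrt (CV * CU)) ∧
    (v ⬝ᵥ ((SigmaF M)⁻¹).mulVec v ≤ CV →
      Real.sqrt (∑ f, (∑ s, M s f) * minWNormSol M v f ^ 2) ≤ Real.sqrt CV) :=
  stmt5_general S F M hnn hdet v CV CU
end

section
/- In a finite-horizon POMDP with memoryless policies π_e and π_b such that π_b(a|o) > 0 for all o, a, the function V_F(f_h) = (Σ_{h'=h}^H R(o_{h'}, a_{h'})) · Π_{h'=h}^H (π_e(a_{h'}|o_{h'})/π_b(a_{h'}|o_{h'})) satisfies E_{π_b}[V_F(f_h) | s_h = s] = V^{π_e}_S(s) for every latent state s; that is, the importance-sampling construction is a valid future-dependent value function. -/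
open Finset Matrix

noncomputable section

open POMDP

namespace Stmt6Aux

set_option linter.unusedSectionVars false

variable {S O A : Type} [Fintype S] [Fintype O] [Fintype A]
  [DecidableEq S] [DecidableEq O] [DecidableEq A]

lemma sum_pi_succ {X : Type} [Fintype X] (j : ℕ) (f : (Fin (j+1) → X) → ℝ) :
    ∑ w : Fin (j+1) → X, f w = ∑ x : X, ∑ w : Fin j → X, f (Fin.cons x w) := by
  rw [← (Fin.consEquiv fun _ => X).sum_comp f, Fintype.sum_prod_type]
  rfl

/-- One step of the chain: emission, policy, transition. -/
def step (P : POMDP S O A) (π : O → A → ℝ) (s0 : S) (x : O × A × S) : ℝ :=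
  P.Em s0 x.1 * π x.1 x.2.1 * P.T s0 x.2.1 x.2.2

/-- The probability of a suffix trajectory `w` of length `j` starting from latent state `s0`. -/
def chain (P : POMDP S O A) (π : O → A → ℝ) : (j : ℕ) → S → (Fin j → O × A × S) → ℝ
  | 0, _, _ => 1
  | j + 1, s0, w => step P π s0 (w 0) * chain P π j (w 0).2.2 (Fin.tail w)

/-- The latent state visited at time `a` along `(s0, w)`. -/
def stAt : (j : ℕ) → S → (Fin j → O × A × S) → ℕ → S
  | _, s0, _, 0 => s0
  | 0, s0, _, _ + 1 => s0
  | j + 1, _, w, a + 1 => stAt j ((w 0).2.2) (Fin.tail w) a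

lemma stAt_zero (j : ℕ) (s0 : S) (w : Fin j → O × A × S) : stAt j s0 w 0 = s0 := by
  cases j <;> rfl

lemma stAt_succ (j a : ℕ) (s0 : S) (w : Fin (j+1) → O × A × S) :
    stAt (j+1) s0 w (a+1) = stAt j ((w 0).2.2) (Fin.tail w) a := rfl

lemma sum_step_mul (P : POMDP S O A) (π : O → A → ℝ) (s0 : S) (φ : O → A → S → ℝ) :
    ∑ x : O × A × S, step P π s0 x * φ x.1 x.2.1 x.2.2
      = ∑ o, P.Em s0 o * ∑ a, π o a * ∑ s', P.T s0 a s' * φ o a s' := by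
  simp only [Fintype.sum_prod_type, Finset.mul_sum]
  refine Finset.sum_congr rfl fun o _ => Finset.sum_congr rfl fun a _ =>
    Finset.sum_congr rfl fun s' _ => ?_
  simp only [step]; ring

lemma sum_chain_one (P : POMDP S O A) (π : O → A → ℝ)
    (hEm : ∀ s, ∑ o, P.Em s o = 1) (hπ : ∀ o, ∑ a, π o a = 1)
    (hT : ∀ s a, ∑ s', P.T s a s' = 1) :
    ∀ (j : ℕ) (s0 : S), ∑ w : Fin j → O × A × S, chain P π j s0 w = 1 := by
  intro j
  induction j with
  | zero => intro s0; simp [chain]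
  | succ j ih =>
      intro s0
      rw [sum_pi_succ]
      have : ∀ x : O × A × S,
          ∑ w : Fin j → O × A × S, chain P π (j+1) s0 (Fin.cons x w)
            = step P π s0 x := by
        intro x
        simp only [chain, Fin.cons_zero, Fin.tail_cons]
        rw [← Finset.mul_sum, ih, mul_one]
      rw [Finset.sum_congr rfl fun x _ => this x]
      have := sum_step_mul P π s0 (fun _ _ _ => 1)
      simp only [mul_one] at this
      rw [this]
      simp [hT, hπ, hEm]

lemma sum_chain_val (P : POMDP S O A) (π : O → A → ℝ)
    (hEm : ∀ s, ∑ o, P.Em s o = 1) (hπ : ∀ o, ∑ a, π o a = 1)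
    (hT : ∀ s a, ∑ s', P.T s a s' = 1) :
    ∀ (j : ℕ) (s0 : S),
      ∑ w : Fin j → O × A × S,
        chain P π j s0 w * (∑ k : Fin j, P.R (w k).1 (w k).2.1)
        = POMDP.latentValueAux P π j s0 := by
  intro j
  induction j with
  | zero => intro s0; simp [chain, POMDP.latentValueAux]
  | succ j ih =>
      intro s0
      rw [sum_pi_succ]
      have key : ∀ x : O × A × S,
          ∑ w : Fin j → O × A × S,
            chain P π (j+1) s0 (Fin.cons x w)
              * (∑ k : Fin (j+1), P.R ((Fin.cons x w : Fin (j+1) → O × A × S) k).1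
                  ((Fin.cons x w : Fin (j+1) → O × A × S) k).2.1)
            = step P π s0 x * (P.R x.1 x.2.1 + POMDP.latentValueAux P π j x.2.2) := by
        intro x
        have : ∀ w : Fin j → O × A × S,
            chain P π (j+1) s0 (Fin.cons x w)
              * (∑ k : Fin (j+1), P.R ((Fin.cons x w : Fin (j+1) → O × A × S) k).1
                  ((Fin.cons x w : Fin (j+1) → O × A × S) k).2.1)
            = step P π s0 x *
                (chain P π j x.2.2 w * P.R x.1 x.2.1
                  + chain P π j x.2.2 w * (∑ k : Fin j, P.R (w k).1 (w k).2.1)) := by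
          intro w
          simp only [chain, Fin.cons_zero, Fin.tail_cons, Fin.sum_univ_succ, Fin.cons_succ]
          ring
        rw [Finset.sum_congr rfl fun w _ => this w, ← Finset.mul_sum]
        congr 1
        rw [Finset.sum_add_distrib, ← Finset.sum_mul, sum_chain_one P π hEm hπ hT, one_mul,
          ih x.2.2]
      rw [Finset.sum_congr rfl fun x _ => key x,
        sum_step_mul P π s0 (fun o a s' => P.R o a + POMDP.latentValueAux P π j s')]
      show _ = POMDP.latentValueAux P π (j+1) s0
      rw [POMDP.latentValueAux]
      refine Finset.sum_congr rfl fun o _ => ?_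
      congr 1
      refine Finset.sum_congr rfl fun a _ => ?_
      congr 1
      simp only [mul_add]
      rw [Finset.sum_add_distrib, ← Finset.sum_mul, hT s0 a, one_mul]

lemma chain_ratio (P : POMDP S O A) (πe πb : O → A → ℝ)
    (hπb : ∀ o a, 0 < πb o a) :
    ∀ (j : ℕ) (s0 : S) (w : Fin j → O × A × S),
      chain P πb j s0 w * (∏ k : Fin j, πe (w k).1 (w k).2.1 / πb (w k).1 (w k).2.1)
        = chain P πe j s0 w := by
  intro j
  induction j with
  | zero => intro s0 w; simp [chain]
  | succ j ih =>
      intro s0 w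
      rw [Fin.prod_univ_succ]
      have h1 : step P πb s0 (w 0) * (πe (w 0).1 (w 0).2.1 / πb (w 0).1 (w 0).2.1)
          = step P πe s0 (w 0) := by
        have hb := (hπb (w 0).1 (w 0).2.1).ne'
        simp only [step]
        field_simp
      calc chain P πb (j+1) s0 w *
            ((πe (w 0).1 (w 0).2.1 / πb (w 0).1 (w 0).2.1) *
              ∏ k : Fin j, πe (w k.succ).1 (w k.succ).2.1 / πb (w k.succ).1 (w k.succ).2.1)
          = (step P πb s0 (w 0) * (πe (w 0).1 (w 0).2.1 / πb (w 0).1 (w 0).2.1)) *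
              (chain P πb j ((w 0)).2.2 (Fin.tail w) *
                ∏ k : Fin j, πe (Fin.tail w k).1 (Fin.tail w k).2.1
                  / πb (Fin.tail w k).1 (Fin.tail w k).2.1) := by
            simp only [chain, Fin.tail]; ring
        _ = step P πe s0 (w 0) * chain P πe j ((w 0)).2.2 (Fin.tail w) := by
            rw [h1, ih]
        _ = chain P πe (j+1) s0 w := rfl

/-- Denominator kernel: probability of `state_a = s` along a `j`-step chain from `s0`. -/
def Dfun (P : POMDP S O A) (πb : O → A → ℝ) (s : S) (j a : ℕ) (s0 : S) : ℝ :=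
  ∑ w : Fin j → O × A × S, (if stAt j s0 w a = s then 1 else 0) * chain P πb j s0 w

/-- Numerator kernel: indicator times IS-weighted return from time `a`. -/
def Nfun (P : POMDP S O A) (πe πb : O → A → ℝ) (s : S) (j a : ℕ) (s0 : S) : ℝ :=
  ∑ w : Fin j → O × A × S,
    (if stAt j s0 w a = s then 1 else 0) * chain P πb j s0 w *
      (∑ k : Fin j, if a ≤ (k : ℕ) then P.R (w k).1 (w k).2.1 else 0) *
      (∏ k : Fin j, if a ≤ (k : ℕ) then πe (w k).1 (w k).2.1 / πb (w k).1 (w k).2.1 else 1)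

lemma main (P : POMDP S O A)
    (hEm : ∀ s, ∑ o, P.Em s o = 1) (hT : ∀ s a, ∑ s', P.T s a s' = 1)
    (πe πb : O → A → ℝ)
    (hπe : ∀ o, ∑ a, πe o a = 1) (hπb : ∀ o a, 0 < πb o a) (hπb1 : ∀ o, ∑ a, πb o a = 1)
    (s : S) :
    ∀ (a j : ℕ), a ≤ j → ∀ s0 : S,
      Nfun P πe πb s j a s0 = Dfun P πb s j a s0 * POMDP.latentValueAux P πe (j - a) s := by
  intro a
  induction a with
  | zero =>
      intro j _ s0
      simp only [Nfun, Dfun, stAt_zero, Nat.zero_le, if_true, Nat.sub_zero]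
      by_cases hs : s0 = s
      · subst hs
        simp only [↓reduceIte, one_mul]
        rw [sum_chain_one P πb hEm hπb1 hT j s0, one_mul]
        have : ∀ w : Fin j → O × A × S,
            chain P πb j s0 w * (∑ k : Fin j, P.R (w k).1 (w k).2.1) *
              (∏ k : Fin j, πe (w k).1 (w k).2.1 / πb (w k).1 (w k).2.1)
            = chain P πe j s0 w * (∑ k : Fin j, P.R (w k).1 (w k).2.1) := by
          intro w
          rw [mul_right_comm, chain_ratio P πe πb hπb j s0 w]
        rw [Finset.sum_congr rfl fun w _ => this w, sum_chain_val P πe hEm hπe hT j s0]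
      · simp [if_neg hs]
  | succ a ih =>
      intro j hj s0
      obtain ⟨j', rfl⟩ : ∃ j', j = j' + 1 := ⟨j - 1, by omega⟩
      have ha' : a ≤ j' := by omega
      have expandN : Nfun P πe πb s (j'+1) (a+1) s0
          = ∑ x : O × A × S, step P πb s0 x * Nfun P πe πb s j' a x.2.2 := by
        rw [Nfun, sum_pi_succ]
        refine Finset.sum_congr rfl fun x _ => ?_
        have hsummand : ∀ w : Fin j' → O × A × S,
            (if stAt (j'+1) s0 (Fin.cons x w) (a+1) = s then 1 else 0) *
              chain P πb (j'+1) s0 (Fin.cons x w) *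
              (∑ k : Fin (j'+1), if a + 1 ≤ (k : ℕ)
                then P.R ((Fin.cons x w : Fin (j'+1) → O × A × S) k).1
                  ((Fin.cons x w : Fin (j'+1) → O × A × S) k).2.1 else 0) *
              (∏ k : Fin (j'+1), if a + 1 ≤ (k : ℕ)
                then πe ((Fin.cons x w : Fin (j'+1) → O × A × S) k).1
                    ((Fin.cons x w : Fin (j'+1) → O × A × S) k).2.1 /
                  πb ((Fin.cons x w : Fin (j'+1) → O × A × S) k).1
                    ((Fin.cons x w : Fin (j'+1) → O × A × S) k).2.1 else 1)
            = step P πb s0 x *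
                ((if stAt j' x.2.2 w a = s then 1 else 0) * chain P πb j' x.2.2 w *
                  (∑ k : Fin j', if a ≤ (k : ℕ) then P.R (w k).1 (w k).2.1 else 0) *
                  (∏ k : Fin j', if a ≤ (k : ℕ)
                    then πe (w k).1 (w k).2.1 / πb (w k).1 (w k).2.1 else 1)) := by
          intro w
          have e1 : stAt (j'+1) s0 (Fin.cons x w) (a+1) = stAt j' x.2.2 w a := by
            rw [stAt_succ]; simp [Fin.tail_cons]
          have e2 : chain P πb (j'+1) s0 (Fin.cons x w)
              = step P πb s0 x * chain P πb j' x.2.2 w := by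
            simp [chain, Fin.tail_cons]
          have e3 : (∑ k : Fin (j'+1), if a + 1 ≤ (k : ℕ)
                then P.R ((Fin.cons x w : Fin (j'+1) → O × A × S) k).1
                  ((Fin.cons x w : Fin (j'+1) → O × A × S) k).2.1 else 0)
              = ∑ k : Fin j', if a ≤ (k : ℕ) then P.R (w k).1 (w k).2.1 else 0 := by
            rw [Fin.sum_univ_succ]
            simp [Fin.cons_succ, Nat.succ_le_succ_iff]
          have e4 : (∏ k : Fin (j'+1), if a + 1 ≤ (k : ℕ)
                then πe ((Fin.cons x w : Fin (j'+1) → O × A × S) k).1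
                    ((Fin.cons x w : Fin (j'+1) → O × A × S) k).2.1 /
                  πb ((Fin.cons x w : Fin (j'+1) → O × A × S) k).1
                    ((Fin.cons x w : Fin (j'+1) → O × A × S) k).2.1 else 1)
              = ∏ k : Fin j', if a ≤ (k : ℕ)
                  then πe (w k).1 (w k).2.1 / πb (w k).1 (w k).2.1 else 1 := by
            rw [Fin.prod_univ_succ]
            simp [Fin.cons_succ, Nat.succ_le_succ_iff]
          rw [e1, e2, e3, e4]; ring
        rw [Finset.sum_congr rfl fun w _ => hsummand w, ← Finset.mul_sum, Nfun]
      have expandD : Dfun P πb s (j'+1) (a+1) s0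
          = ∑ x : O × A × S, step P πb s0 x * Dfun P πb s j' a x.2.2 := by
        rw [Dfun, sum_pi_succ]
        refine Finset.sum_congr rfl fun x _ => ?_
        have hsummand : ∀ w : Fin j' → O × A × S,
            (if stAt (j'+1) s0 (Fin.cons x w) (a+1) = s then 1 else 0) *
              chain P πb (j'+1) s0 (Fin.cons x w)
            = step P πb s0 x *
                ((if stAt j' x.2.2 w a = s then 1 else 0) * chain P πb j' x.2.2 w) := by
          intro w
          have e1 : stAt (j'+1) s0 (Fin.cons x w) (a+1) = stAt j' x.2.2 w a := by
            rw [stAt_succ]; simp [Fin.tail_cons]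
          have e2 : chain P πb (j'+1) s0 (Fin.cons x w)
              = step P πb s0 x * chain P πb j' x.2.2 w := by
            simp [chain, Fin.tail_cons]
          rw [e1, e2]; ring
        rw [Finset.sum_congr rfl fun w _ => hsummand w, ← Finset.mul_sum, Dfun]
      rw [expandN, expandD, Finset.sum_mul]
      refine Finset.sum_congr rfl fun x _ => ?_
      have hjj : (j' + 1) - (a + 1) = j' - a := by omega
      rw [hjj, ih j' ha' x.2.2, mul_assoc]

/-- The obvious equivalence between triples of tuples and tuples of triples. -/
def tripleEquiv (j : ℕ) :
    ((Fin j → S) × (Fin j → O) × (Fin j → A)) ≃ (Fin j → O × A × S) where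
  toFun := fun p k => (p.2.1 k, p.2.2 k, p.1 k)
  invFun := fun w => (fun k => (w k).2.2, fun k => (w k).1, fun k => (w k).2.1)
  left_inv := fun p => rfl
  right_inv := fun w => rfl

lemma sum_triple {j : ℕ} (F : (Fin j → S) → (Fin j → O) → (Fin j → A) → ℝ) :
    (∑ t : Fin j → S, ∑ u : Fin j → O, ∑ b : Fin j → A, F t u b)
      = ∑ w : Fin j → O × A × S,
          F (fun k => (w k).2.2) (fun k => (w k).1) (fun k => (w k).2.1) := by
  calc (∑ t : Fin j → S, ∑ u : Fin j → O, ∑ b : Fin j → A, F t u b)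
      = ∑ p : (Fin j → S) × (Fin j → O) × (Fin j → A), F p.1 p.2.1 p.2.2 := by
        rw [Fintype.sum_prod_type]
        exact Finset.sum_congr rfl fun t _ => by rw [Fintype.sum_prod_type]
    _ = _ := by
        rw [← Equiv.sum_comp (tripleEquiv (S := S) (O := O) (A := A) j)
          (fun w => F (fun k => (w k).2.2) (fun k => (w k).1) (fun k => (w k).2.1))]
        exact Finset.sum_congr rfl fun p _ => by
          simp only [tripleEquiv, Equiv.coe_fn_mk]

lemma prod_eq_chain (P : POMDP S O A) (π : O → A → ℝ) :
    ∀ (j : ℕ) (s0 : S) (w : Fin j → O × A × S),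
      (∏ k : Fin j,
        (P.Em ((Fin.cons s0 (fun i => (w i).2.2) : Fin (j+1) → S) k.castSucc) (w k).1 *
          π (w k).1 (w k).2.1 *
          P.T ((Fin.cons s0 (fun i => (w i).2.2) : Fin (j+1) → S) k.castSucc) (w k).2.1
            ((Fin.cons s0 (fun i => (w i).2.2) : Fin (j+1) → S) k.succ)))
      = chain P π j s0 w := by
  intro j
  induction j with
  | zero => intro s0 w; simp [chain]
  | succ j ih =>
      intro s0 w
      rw [Fin.prod_univ_succ,
        show chain P π (j+1) s0 w
          = step P π s0 (w 0) * chain P π j ((w 0).2.2) (Fin.tail w) from rfl,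
        ← ih ((w 0).2.2) (Fin.tail w)]
      have hv : (Fin.cons ((w 0).2.2) (fun i => ((Fin.tail w) i).2.2) : Fin (j+1) → S)
          = fun i : Fin (j+1) => (w i).2.2 :=
        Fin.cons_self_tail (fun i : Fin (j+1) => (w i).2.2)
      rw [hv]
      have h1 : (P.Em ((Fin.cons s0 (fun i => (w i).2.2) : Fin (j+2) → S) (0 : Fin (j+1)).castSucc) (w 0).1 *
            π (w 0).1 (w 0).2.1 *
            P.T ((Fin.cons s0 (fun i => (w i).2.2) : Fin (j+2) → S) (0 : Fin (j+1)).castSucc) (w 0).2.1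
              ((Fin.cons s0 (fun i => (w i).2.2) : Fin (j+2) → S) (0 : Fin (j+1)).succ))
          = step P π s0 (w 0) := by
        simp [step, Fin.cons_zero, Fin.cons_succ]
      rw [h1]
      congr 1

lemma stAt_eq : ∀ (a j : ℕ) (h : a < j + 1) (s0 : S) (w : Fin j → O × A × S),
    stAt j s0 w a = (Fin.cons s0 (fun k => (w k).2.2) : Fin (j+1) → S) ⟨a, h⟩ := by
  intro a
  induction a with
  | zero =>
      intro j h s0 w
      rw [stAt_zero]
      simp [Fin.mk_zero]
  | succ a ih =>
      intro j h s0 w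
      obtain ⟨j', rfl⟩ : ∃ j', j = j' + 1 := ⟨j - 1, by omega⟩
      rw [stAt_succ, ih j' (by omega) ((w 0).2.2) (Fin.tail w)]
      have hv : (Fin.cons ((w 0).2.2) (fun i => ((Fin.tail w) i).2.2) : Fin (j'+1) → S)
          = fun i : Fin (j'+1) => (w i).2.2 :=
        Fin.cons_self_tail (fun i : Fin (j'+1) => (w i).2.2)
      rw [hv]
      have h2 : (⟨a+1, h⟩ : Fin (j'+2)) = Fin.succ ⟨a, by omega⟩ := rfl
      rw [h2, Fin.cons_succ]

lemma traj_decomp (P : POMDP S O A) (π : O → A → ℝ) (F : P.Traj → ℝ) :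
    ∑ tr : P.Traj, P.trajProb (fun _ => π) tr * F tr
      = ∑ s0 : S, P.d1 s0 * ∑ w : Fin P.H → O × A × S,
          chain P π P.H s0 w *
            F (Fin.cons s0 (fun k => (w k).2.2), fun k => (w k).1, fun k => (w k).2.1) := by
  simp only [Fintype.sum_prod_type]
  rw [sum_pi_succ]
  refine Finset.sum_congr rfl fun s0 _ => ?_
  rw [sum_triple (fun t u b =>
    P.trajProb (fun _ => π) (Fin.cons s0 t, u, b) * F (Fin.cons s0 t, u, b))]
  rw [Finset.mul_sum]
  refine Finset.sum_congr rfl fun w _ => ?_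
  simp only [POMDP.trajProb, Fin.cons_zero]
  rw [prod_eq_chain P π P.H s0 w]
  ring

end Stmt6Aux


/-- the importance-sampling construction
`V_F(f_h) = (Σ_{h'≥h} R(o_{h'}, a_{h'})) · Π_{h'≥h} π_e(a_{h'}|o_{h'}) / π_b(a_{h'}|o_{h'})`
is a valid future-dependent value function:
`E_{π_b}[V_F(f_h) | s_h = s] = V^{π_e}_S(s)` for every latent state `s`. -/
theorem stmt6
    (S O A : Type) [Fintype S] [Fintype O] [Fintype A]
    [DecidableEq S] [DecidableEq O] [DecidableEq A]
    (P : POMDP S O A)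
    (hT : ∀ s a, (∀ s', 0 ≤ P.T s a s') ∧ ∑ s', P.T s a s' = 1)
    (hEm : ∀ s, (∀ o, 0 ≤ P.Em s o) ∧ ∑ o, P.Em s o = 1)
    (hd1 : (∀ s, 0 ≤ P.d1 s) ∧ ∑ s, P.d1 s = 1)
    (hR : ∀ o a, 0 ≤ P.R o a ∧ P.R o a ≤ 1)
    (πe πb : O → A → ℝ)
    (hπe : ∀ o, (∀ a, 0 ≤ πe o a) ∧ ∑ a, πe o a = 1)
    (hπb : ∀ o, (∀ a, 0 < πb o a) ∧ ∑ a, πb o a = 1)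
    (hpos : ∀ (h : Fin P.H) (s : S), 0 < P.stateDist (fun _ => πb) h s) :
    ∀ (h : Fin P.H) (s : S),
      P.condExp (fun _ => πb) (fun tr => tr.1 h.castSucc = s)
          (fun tr =>
            (∑ k : Fin P.H, if (h : ℕ) ≤ (k : ℕ) then P.R (tr.2.1 k) (tr.2.2 k) else 0) *
              ∏ k : Fin P.H,
                if (h : ℕ) ≤ (k : ℕ) then πe (tr.2.1 k) (tr.2.2 k) / πb (tr.2.1 k) (tr.2.2 k)
                else 1) =
        P.latentValue πe (h : ℕ) s := by
  intro h s
  have hlt : (h : ℕ) < P.H + 1 := by omega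
  have hmain := Stmt6Aux.main P (fun s' => (hEm s').2) (fun s' a' => (hT s' a').2) πe πb
    (fun o => (hπe o).2) (fun o a' => (hπb o).1 a') (fun o => (hπb o).2) s (h : ℕ) P.H
    (le_of_lt h.isLt)
  have hst : ∀ (s0 : S) (w : Fin P.H → O × A × S),
      (Fin.cons s0 (fun k => (w k).2.2) : Fin (P.H + 1) → S) h.castSucc
        = Stmt6Aux.stAt P.H s0 w (h : ℕ) :=
    fun s0 w => (Stmt6Aux.stAt_eq (h : ℕ) P.H hlt s0 w).symm
  have keyN : ∀ s0 : S,
      (∑ w : Fin P.H → O × A × S, Stmt6Aux.chain P πb P.H s0 w *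
        ((if (Fin.cons s0 (fun k => (w k).2.2) : Fin (P.H + 1) → S) h.castSucc = s
            then (1 : ℝ) else 0) *
          ((∑ k : Fin P.H, if (h : ℕ) ≤ (k : ℕ) then P.R (w k).1 (w k).2.1 else 0) *
            ∏ k : Fin P.H, if (h : ℕ) ≤ (k : ℕ)
              then πe (w k).1 (w k).2.1 / πb (w k).1 (w k).2.1 else 1)))
      = Stmt6Aux.Nfun P πe πb s P.H (h : ℕ) s0 := by
    intro s0
    rw [Stmt6Aux.Nfun]
    refine Finset.sum_congr rfl fun w _ => ?_
    rw [hst s0 w]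
    ring
  have keyD : ∀ s0 : S,
      (∑ w : Fin P.H → O × A × S, Stmt6Aux.chain P πb P.H s0 w *
        ((if (Fin.cons s0 (fun k => (w k).2.2) : Fin (P.H + 1) → S) h.castSucc = s
            then (1 : ℝ) else 0) * 1))
      = Stmt6Aux.Dfun P πb s P.H (h : ℕ) s0 := by
    intro s0
    rw [Stmt6Aux.Dfun]
    refine Finset.sum_congr rfl fun w _ => ?_
    rw [hst s0 w]
    ring
  have hnum : (∑ tr : P.Traj, if tr.1 h.castSucc = s then P.trajProb (fun _ => πb) tr *
        ((∑ k : Fin P.H, if (h : ℕ) ≤ (k : ℕ) then P.R (tr.2.1 k) (tr.2.2 k) else 0) *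
          ∏ k : Fin P.H, if (h : ℕ) ≤ (k : ℕ)
            then πe (tr.2.1 k) (tr.2.2 k) / πb (tr.2.1 k) (tr.2.2 k) else 1) else 0)
      = ∑ s0 : S, P.d1 s0 * Stmt6Aux.Nfun P πe πb s P.H (h : ℕ) s0 := by
    have h1 : (∑ tr : P.Traj, if tr.1 h.castSucc = s then P.trajProb (fun _ => πb) tr *
          ((∑ k : Fin P.H, if (h : ℕ) ≤ (k : ℕ) then P.R (tr.2.1 k) (tr.2.2 k) else 0) *
            ∏ k : Fin P.H, if (h : ℕ) ≤ (k : ℕ)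
              then πe (tr.2.1 k) (tr.2.2 k) / πb (tr.2.1 k) (tr.2.2 k) else 1) else 0)
        = ∑ tr : P.Traj, P.trajProb (fun _ => πb) tr *
            ((if tr.1 h.castSucc = s then (1 : ℝ) else 0) *
              ((∑ k : Fin P.H, if (h : ℕ) ≤ (k : ℕ) then P.R (tr.2.1 k) (tr.2.2 k) else 0) *
                ∏ k : Fin P.H, if (h : ℕ) ≤ (k : ℕ)
                  then πe (tr.2.1 k) (tr.2.2 k) / πb (tr.2.1 k) (tr.2.2 k) else 1)) := by
      refine Finset.sum_congr rfl fun tr _ => ?_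
      split_ifs <;> ring
    rw [h1, Stmt6Aux.traj_decomp P πb (fun tr =>
      (if tr.1 h.castSucc = s then (1 : ℝ) else 0) *
        ((∑ k : Fin P.H, if (h : ℕ) ≤ (k : ℕ) then P.R (tr.2.1 k) (tr.2.2 k) else 0) *
          ∏ k : Fin P.H, if (h : ℕ) ≤ (k : ℕ)
            then πe (tr.2.1 k) (tr.2.2 k) / πb (tr.2.1 k) (tr.2.2 k) else 1))]
    exact Finset.sum_congr rfl fun s0 _ => by rw [← keyN s0]
  have hden : (∑ tr : P.Traj, if tr.1 h.castSucc = s then P.trajProb (fun _ => πb) tr else 0)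
      = ∑ s0 : S, P.d1 s0 * Stmt6Aux.Dfun P πb s P.H (h : ℕ) s0 := by
    have h1 : (∑ tr : P.Traj, if tr.1 h.castSucc = s then P.trajProb (fun _ => πb) tr else 0)
        = ∑ tr : P.Traj, P.trajProb (fun _ => πb) tr *
            ((if tr.1 h.castSucc = s then (1 : ℝ) else 0) * 1) := by
      refine Finset.sum_congr rfl fun tr _ => ?_
      split_ifs <;> ring
    rw [h1, Stmt6Aux.traj_decomp P πb (fun tr =>
      (if tr.1 h.castSucc = s then (1 : ℝ) else 0) * 1)]
    exact Finset.sum_congr rfl fun s0 _ => by rw [← keyD s0]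
  have hdpos : (0 : ℝ) <
      ∑ tr : P.Traj, if tr.1 h.castSucc = s then P.trajProb (fun _ => πb) tr else 0 := by
    have hp := hpos h s
    rw [POMDP.stateDist, POMDP.expec] at hp
    have heq : (∑ tr : P.Traj, P.trajProb (fun _ => πb) tr *
          (if tr.1 h.castSucc = s then (1 : ℝ) else 0))
        = ∑ tr : P.Traj, if tr.1 h.castSucc = s then P.trajProb (fun _ => πb) tr else 0 := by
      refine Finset.sum_congr rfl fun tr _ => ?_
      split_ifs <;> ring
    rwa [heq] at hp
  rw [POMDP.condExp, hnum, hden]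
  have hfin : (∑ s0 : S, P.d1 s0 * Stmt6Aux.Nfun P πe πb s P.H (h : ℕ) s0)
      = (∑ s0 : S, P.d1 s0 * Stmt6Aux.Dfun P πb s P.H (h : ℕ) s0) *
          POMDP.latentValueAux P πe (P.H - (h : ℕ)) s := by
    rw [Finset.sum_mul]
    exact Finset.sum_congr rfl fun s0 _ => by rw [hmain s0]; ring
  rw [hfin, POMDP.latentValue]
  have hne : (∑ s0 : S, P.d1 s0 * Stmt6Aux.Dfun P πb s P.H (h : ℕ) s0) ≠ 0 := by
    rw [← hden]; exact hdpos.ne'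
  rw [mul_comm, mul_div_assoc, div_self hne, mul_one]
end
end

section
/- Let M be an S×F real matrix with nonnegative entries, each row summing to 1, and no zero column, with Z = diag(1ᵀM) and Σ_F = M Z^{-1} Mᵀ invertible. Let r ∈ ℝ^F have all entries in [0, H] and set v = M r (the on-policy case, where v = V^{π_e}_{S,h} = M_{F,h} R⁺_h). Then vᵀ Σ_F^{-1} v ≤ S H², i.e., ‖v‖_{Σ_F^{-1}} ≤ H·sqrt(S). -/
open Matrix

/-- on-policy L2 outcome coverage: if `r ∈ [0,H]^F` and `v = M r`, then
`vᵀ Σ_F⁻¹ v ≤ S H²`, i.e. `‖v‖_{Σ_F⁻¹} ≤ H sqrt S`. -/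
theorem stmt7 (S F : Type) [Fintype S] [Fintype F] [DecidableEq S] [DecidableEq F]
    [Nonempty S] [Nonempty F]
    (M : Matrix S F ℝ)
    (hnn : ∀ s f, 0 ≤ M s f)
    (hrow : ∀ s, ∑ f, M s f = 1)
    (hcol : ∀ f, ∃ s, M s f ≠ 0)
    (hdet : IsUnit (SigmaF M).det)
    (H : ℝ) (hH : 0 ≤ H)
    (r : F → ℝ) (hr : ∀ f, 0 ≤ r f ∧ r f ≤ H) :
    M.mulVec r ⬝ᵥ ((SigmaF M)⁻¹).mulVec (M.mulVec r) ≤ (Fintype.card S : ℝ) * H ^ 2 ∧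
    Real.sqrt (M.mulVec r ⬝ᵥ ((SigmaF M)⁻¹).mulVec (M.mulVec r)) ≤
      H * Real.sqrt (Fintype.card S) := by
  set z : F → ℝ := fun f => ∑ s, M s f with hz
  have hzpos : ∀ f, 0 < z f := by
    intro f
    obtain ⟨s, hs⟩ := hcol f
    exact Finset.sum_pos' (fun i _ => hnn i f)
      ⟨s, Finset.mem_univ s, lt_of_le_of_ne (hnn s f) (Ne.symm hs)⟩
  set v : S → ℝ := M.mulVec r with hv
  set w : S → ℝ := ((SigmaF M)⁻¹).mulVec v with hw
  set u : F → ℝ := Mᵀ.mulVec w with hu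
  set Q : ℝ := v ⬝ᵥ w with hQ
  -- Σ w = v
  have hSw : (SigmaF M).mulVec w = v := by
    rw [hw, Matrix.mulVec_mulVec, Matrix.mul_nonsing_inv _ hdet, Matrix.one_mulVec]
  -- Q = w ⬝ᵥ Σ w = ∑ f, (z f)⁻¹ * (u f)^2
  have hQ1 : Q = ∑ f, (z f)⁻¹ * (u f) ^ 2 := by
    have : Q = w ⬝ᵥ (SigmaF M).mulVec w := by rw [hSw, hQ, dotProduct_comm]
    rw [this, SigmaF]
    rw [← Matrix.mulVec_mulVec, ← Matrix.mulVec_mulVec]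
    rw [Matrix.dotProduct_mulVec, ← Matrix.mulVec_transpose, ← hu, dotProduct]
    apply Finset.sum_congr rfl; intro f _
    rw [Matrix.mulVec_diagonal]
    simp only [hz]; ring
  -- Q = ∑ f, u f * r f
  have hQ2 : Q = ∑ f, u f * r f := by
    rw [hQ, dotProduct_comm, hv, Matrix.dotProduct_mulVec, ← Matrix.mulVec_transpose,
      ← hu, dotProduct]
  -- Cauchy-Schwarz
  have hcs : Q ^ 2 ≤ Q * ∑ f, z f * (r f) ^ 2 := by
    have key := Finset.sum_mul_sq_le_sq_mul_sq Finset.univ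
      (fun f => u f / Real.sqrt (z f)) (fun f => Real.sqrt (z f) * r f)
    have h1 : ∑ f, (u f / Real.sqrt (z f)) * (Real.sqrt (z f) * r f) = Q := by
      rw [hQ2]; apply Finset.sum_congr rfl; intro f _
      have : Real.sqrt (z f) ≠ 0 := Real.sqrt_ne_zero'.mpr (hzpos f)
      field_simp
    have h2 : ∑ f, (u f / Real.sqrt (z f)) ^ 2 = Q := by
      rw [hQ1]; apply Finset.sum_congr rfl; intro f _
      rw [div_pow, Real.sq_sqrt (hzpos f).le, div_eq_inv_mul]
    have h3 : ∑ f, (Real.sqrt (z f) * r f) ^ 2 = ∑ f, z f * (r f) ^ 2 := by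
      apply Finset.sum_congr rfl; intro f _
      rw [mul_pow, Real.sq_sqrt (hzpos f).le]
    calc Q ^ 2 = (∑ f, (u f / Real.sqrt (z f)) * (Real.sqrt (z f) * r f)) ^ 2 := by rw [h1]
      _ ≤ (∑ f, (u f / Real.sqrt (z f)) ^ 2) * ∑ f, (Real.sqrt (z f) * r f) ^ 2 := key
      _ = Q * ∑ f, z f * (r f) ^ 2 := by rw [h2, h3]
  -- bound the weighted sum of squares
  have hbound : ∑ f, z f * (r f) ^ 2 ≤ (Fintype.card S : ℝ) * H ^ 2 := by
    have hzsum : ∑ f, z f = (Fintype.card S : ℝ) := by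
      rw [hz, Finset.sum_comm]
      simp [hrow]
    calc ∑ f, z f * (r f) ^ 2 ≤ ∑ f, z f * H ^ 2 := by
          apply Finset.sum_le_sum; intro f _
          exact mul_le_mul_of_nonneg_left
            (pow_le_pow_left₀ (hr f).1 (hr f).2 2) (hzpos f).le
      _ = (Fintype.card S : ℝ) * H ^ 2 := by rw [← Finset.sum_mul, hzsum]
  have hC : (0:ℝ) ≤ (Fintype.card S : ℝ) * H ^ 2 :=
    mul_nonneg (Nat.cast_nonneg _) (sq_nonneg _)
  have hQle : Q ≤ (Fintype.card S : ℝ) * H ^ 2 := by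
    rcases le_or_gt Q 0 with h | h
    · linarith
    · have : Q ^ 2 ≤ Q * ((Fintype.card S : ℝ) * H ^ 2) :=
        hcs.trans (mul_le_mul_of_nonneg_left hbound h.le)
      nlinarith
  refine ⟨hQle, ?_⟩
  calc Real.sqrt Q ≤ Real.sqrt ((Fintype.card S : ℝ) * H ^ 2) := Real.sqrt_le_sqrt hQle
    _ = H * Real.sqrt (Fintype.card S) := by
        rw [Real.sqrt_mul (Nat.cast_nonneg _), Real.sqrt_sq hH, mul_comm]
end

section
/- Let M be an S×F real matrix with nonnegative entries, each row summing to 1, and no zero column, with Z = diag(1ᵀM). Let R⁺ ∈ ℝ^F have all entries in (0, H], define the diagonal matrix Z^R with entries Z^R_f = Z_f / R⁺_f, and let Σ^R = M (Z^R)^{-1} Mᵀ, assumed invertible. If ‖(Σ^R)^{-1} v‖_∞ ≤ C for some v ∈ ℝ^S (L∞ outcome coverage), then the vector x = (Z^R)^{-1} Mᵀ (Σ^R)^{-1} v satisfies ‖x‖_∞ ≤ H·C. -/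
open Matrix

/-- The reward-reweighted outcome covariance matrix `Σ^R = M (Z^R)⁻¹ Mᵀ`, where
`Z^R_f = Z_f / R⁺_f` and `Z_f = Σ_s M s f` is the `f`-th column sum. -/
noncomputable def SigmaR {S F : Type} [Fintype S] [Fintype F] [DecidableEq F]
    (M : Matrix S F ℝ) (R : F → ℝ) : Matrix S S ℝ :=
  M * Matrix.diagonal (fun f => ((∑ s, M s f) / R f)⁻¹) * Mᵀ

/-- L∞ outcome coverage bounds the FDVF: if `R⁺ ∈ (0,H]^F` and
`‖(Σ^R)⁻¹ v‖_∞ ≤ C`, then `x = (Z^R)⁻¹ Mᵀ (Σ^R)⁻¹ v` satisfies `‖x‖_∞ ≤ H C`. -/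
theorem stmt8 (S F : Type) [Fintype S] [Fintype F] [DecidableEq S] [DecidableEq F]
    (M : Matrix S F ℝ)
    (hnn : ∀ s f, 0 ≤ M s f)
    (hrow : ∀ s, ∑ f, M s f = 1)
    (hcol : ∀ f, ∃ s, M s f ≠ 0)
    (H : ℝ) (R : F → ℝ) (hR : ∀ f, 0 < R f ∧ R f ≤ H)
    (hdet : IsUnit (SigmaR M R).det)
    (v : S → ℝ) (C : ℝ)
    (hcov : ∀ s, |(((SigmaR M R)⁻¹).mulVec v) s| ≤ C) :
    ∀ f, |((Matrix.diagonal (fun f => ((∑ s, M s f) / R f)⁻¹) * Mᵀ *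
        (SigmaR M R)⁻¹).mulVec v) f| ≤ H * C := by
  intro f
  set w := ((SigmaR M R)⁻¹).mulVec v with hw
  obtain ⟨s0, hs0⟩ := hcol f
  have hC : 0 ≤ C := le_trans (abs_nonneg _) (hcov s0)
  have hZ : 0 < ∑ s, M s f :=
    Finset.sum_pos' (fun s _ => hnn s f)
      ⟨s0, Finset.mem_univ _, lt_of_le_of_ne (hnn s0 f) (Ne.symm hs0)⟩
  have hRf := hR f
  have hentry : ((Matrix.diagonal (fun f => ((∑ s, M s f) / R f)⁻¹) * Mᵀ *
      (SigmaR M R)⁻¹).mulVec v) f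
      = ((∑ s, M s f) / R f)⁻¹ * ∑ s, M s f * w s := by
    rw [← Matrix.mulVec_mulVec, ← Matrix.mulVec_mulVec, Matrix.mulVec_diagonal]
    simp [Matrix.mulVec_diagonal, Matrix.mulVec, dotProduct, Matrix.transpose_apply, hw]
  rw [hentry, abs_mul]
  have h1 : |((∑ s, M s f) / R f)⁻¹| = R f / (∑ s, M s f) := by
    rw [abs_of_nonneg (inv_nonneg.mpr (div_nonneg hZ.le hRf.1.le)), inv_div]
  have h2 : |∑ s, M s f * w s| ≤ (∑ s, M s f) * C := by
    calc |∑ s, M s f * w s| ≤ ∑ s, |M s f * w s| := Finset.abs_sum_le_sum_abs _ _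
      _ ≤ ∑ s, M s f * C := by
          refine Finset.sum_le_sum fun s _ => ?_
          rw [abs_mul, abs_of_nonneg (hnn s f)]
          exact mul_le_mul_of_nonneg_left (hcov s) (hnn s f)
      _ = (∑ s, M s f) * C := by rw [← Finset.sum_mul]
  rw [h1]
  calc R f / (∑ s, M s f) * |∑ s, M s f * w s|
      ≤ R f / (∑ s, M s f) * ((∑ s, M s f) * C) :=
        mul_le_mul_of_nonneg_left h2 (div_nonneg hRf.1.le hZ.le)
    _ = R f * C := by field_simp
    _ ≤ H * C := mul_le_mul_of_nonneg_right hRf.2 hC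
end

section
/- Let M be an S×F real matrix with nonnegative entries, each row summing to 1, and no zero column, with Z = diag(1ᵀM). Let R⁺ ∈ ℝ^F have all positive entries, define the diagonal matrix Z^R with entries Z^R_f = Z_f / R⁺_f, and Σ^R = M (Z^R)^{-1} Mᵀ, assumed invertible. Then Σ^R · 1 = M R⁺ (where 1 is the all-ones vector in ℝ^S). Consequently, if v = M R⁺ (the on-policy case v = V^{π_e}_{S,h}), then (Σ^R)^{-1} v = 1, so the L∞ outcome coverage assumption holds with constant 1, and the constructed vector x = (Z^R)^{-1} Mᵀ (Σ^R)^{-1} v equals R⁺ exactly. -/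
open Matrix

namespace Matrix

variable {S F K : Type*} [Fintype S]

theorem sum_col_pos_of_nonneg [AddCommMonoid K] [PartialOrder K] [IsOrderedCancelAddMonoid K]
    {M : Matrix S F K} (hnn : ∀ s f, 0 ≤ M s f) {f : F}
    (hf : ∃ s, M s f ≠ 0) : 0 < ∑ s, M s f := by
  obtain ⟨s, hs⟩ := hf
  exact Finset.sum_pos' (fun i _ => hnn i f) ⟨s, Finset.mem_univ s, (hnn s f).lt_of_ne' hs⟩

theorem transpose_mulVec_one [Semiring K] (M : Matrix S F K) :
    Mᵀ *ᵥ (fun _ => 1) = fun f => ∑ s, M s f := by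
  ext f
  simp [mulVec, dotProduct]

theorem diagonal_inv_div_mulVec [Fintype F] [DecidableEq F] [Field K] {c : F → K}
    (hc : ∀ f, c f ≠ 0) (r : F → K) :
    diagonal (fun f => (c f / r f)⁻¹) *ᵥ c = r := by
  ext f
  rw [mulVec_diagonal, inv_div, div_mul_cancel₀ _ (hc f)]

theorem inv_mulVec_eq_of_mulVec_eq [DecidableEq S] [CommRing K] {A : Matrix S S K}
    (hA : IsUnit A.det) {x v : S → K} (h : A *ᵥ x = v) : A⁻¹ *ᵥ v = x := by
  rw [← h, mulVec_mulVec, nonsing_inv_mul A hA, one_mulVec]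

end Matrix

section SigmaR

variable {S F : Type} [Fintype S] [Fintype F] [DecidableEq F] {M : Matrix S F ℝ}

theorem diagonal_mulVec_transpose_mulVec_one (hZ : ∀ f, ∑ s, M s f ≠ 0) (R : F → ℝ) :
    diagonal (fun f => ((∑ s, M s f) / R f)⁻¹) *ᵥ (Mᵀ *ᵥ fun _ => 1) = R := by
  rw [transpose_mulVec_one, diagonal_inv_div_mulVec hZ]

theorem SigmaR_mulVec_one (hZ : ∀ f, ∑ s, M s f ≠ 0) (R : F → ℝ) :
    SigmaR M R *ᵥ (fun _ => 1) = M *ᵥ R := by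
  rw [SigmaR, ← mulVec_mulVec, ← mulVec_mulVec, diagonal_mulVec_transpose_mulVec_one hZ]

end SigmaR

theorem stmt9_general (S F : Type) [Fintype S] [Fintype F] [DecidableEq S] [DecidableEq F]
    (M : Matrix S F ℝ)
    (hnn : ∀ s f, 0 ≤ M s f)
    (hcol : ∀ f, ∃ s, M s f ≠ 0)
    (R : F → ℝ)
    (hdet : IsUnit (SigmaR M R).det) :
    (SigmaR M R).mulVec (fun _ => 1) = M.mulVec R ∧
    ∀ v : S → ℝ, v = M.mulVec R →
      ((SigmaR M R)⁻¹).mulVec v = (fun _ => 1) ∧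
      (∀ s, |(((SigmaR M R)⁻¹).mulVec v) s| ≤ 1) ∧
      (Matrix.diagonal (fun f => ((∑ s, M s f) / R f)⁻¹) * Mᵀ *
        (SigmaR M R)⁻¹).mulVec v = R := by
  have hZ : ∀ f, ∑ s, M s f ≠ 0 := fun f => (sum_col_pos_of_nonneg hnn (hcol f)).ne'
  have hSigma := SigmaR_mulVec_one hZ R
  refine ⟨hSigma, ?_⟩
  rintro v rfl
  have hinv := inv_mulVec_eq_of_mulVec_eq hdet hSigma
  refine ⟨hinv, fun s => by simp [hinv], ?_⟩
  rw [← mulVec_mulVec, hinv, ← mulVec_mulVec, diagonal_mulVec_transpose_mulVec_one hZ]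

/-- on-policy case of the L∞ outcome coverage: `Σ^R 1 = M R⁺`; consequently, if
`v = M R⁺` then `(Σ^R)⁻¹ v = 1` (so L∞ outcome coverage holds with constant `1`) and the
constructed vector `x = (Z^R)⁻¹ Mᵀ (Σ^R)⁻¹ v` equals `R⁺` exactly. -/
theorem stmt9 (S F : Type) [Fintype S] [Fintype F] [DecidableEq S] [DecidableEq F]
    (M : Matrix S F ℝ)
    (hnn : ∀ s f, 0 ≤ M s f)
    (hrow : ∀ s, ∑ f, M s f = 1)
    (hcol : ∀ f, ∃ s, M s f ≠ 0)
    (R : F → ℝ) (hR : ∀ f, 0 < R f)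
    (hdet : IsUnit (SigmaR M R).det) :
    (SigmaR M R).mulVec (fun _ => 1) = M.mulVec R ∧
    ∀ v : S → ℝ, v = M.mulVec R →
      ((SigmaR M R)⁻¹).mulVec v = (fun _ => 1) ∧
      (∀ s, |(((SigmaR M R)⁻¹).mulVec v) s| ≤ 1) ∧
      (Matrix.diagonal (fun f => ((∑ s, M s f) / R f)⁻¹) * Mᵀ *
        (SigmaR M R)⁻¹).mulVec v = R :=
  stmt9_general S F M hnn hcol R hdet
end

section
/- Let d be a probability distribution on a finite set H and, for each τ ∈ H, let b(τ) ∈ ℝ^S have nonnegative entries summing to 1, with Σ_H = Σ_τ d(τ) b(τ) b(τ)ᵀ. Let σ_min be the smallest eigenvalue of Σ_H with unit eigenvector v_min, define p(s) = Σ_τ d(τ) b(τ)_s (the induced latent state distribution), and let v = c₀ v_min for any nonzero scalar c₀. Then Σ_τ d(τ) ⟨b(τ), v⟩² = σ_min c₀² and Σ_s p(s) v_s² ≥ (min_s p(s)) c₀², hence sqrt((Σ_s p(s) v_s²) / (Σ_τ d(τ) ⟨b(τ), v⟩²)) ≥ sqrt(min_s p(s) / σ_min). In the paper's notation, if c₀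 v_min = B^S_h V for some V ∈ V, then IV(V) ≥ sqrt(min_{s_h} d^{π_b}(s_h) / σ_min(Σ_{H,h})). -/
open Matrix

/-- The belief covariance matrix `Σ_H = Σ_τ d(τ) b(τ) b(τ)ᵀ`. -/
noncomputable def SigmaH {Hist S : Type} [Fintype Hist] [Fintype S]
    (d : Hist → ℝ) (b : Hist → S → ℝ) : Matrix S S ℝ :=
  Matrix.of fun s s' => ∑ τ, d τ * b τ s * b τ s'

/-- lower bound on IV(𝒱) via the smallest eigenvalue of `Σ_H`: if `v_min` is a
unit eigenvector of `Σ_H` for its smallest eigenvalue `σ_min`, `p(s) = Σ_τ d(τ) b(τ)_s`, and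
`v = c₀ v_min` with `c₀ ≠ 0`, then `Σ_τ d(τ) ⟨b(τ), v⟩² = σ_min c₀²`,
`Σ_s p(s) v_s² ≥ (min_s p(s)) c₀²`, and hence
`sqrt((Σ_s p(s) v_s²)/(Σ_τ d(τ)⟨b(τ),v⟩²)) ≥ sqrt(min_s p(s)/σ_min)`. -/
theorem stmt17 (Hist S : Type) [Fintype Hist] [Fintype S] [Nonempty S]
    (d : Hist → ℝ) (hd0 : ∀ τ, 0 ≤ d τ) (hd1 : ∑ τ, d τ = 1)
    (b : Hist → S → ℝ) (hb0 : ∀ τ s, 0 ≤ b τ s) (hb1 : ∀ τ, ∑ s, b τ s = 1)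
    (σmin : ℝ) (vmin : S → ℝ)
    (heig : (SigmaH d b).mulVec vmin = σmin • vmin)
    (hunit : ∑ s, vmin s ^ 2 = 1)
    (hsmallest : ∀ x : S → ℝ, σmin * ∑ s, x s ^ 2 ≤ x ⬝ᵥ (SigmaH d b).mulVec x)
    (c0 : ℝ) (hc0 : c0 ≠ 0) :
    (∑ τ, d τ * (∑ s, b τ s * (c0 * vmin s)) ^ 2 = σmin * c0 ^ 2) ∧
    ((Finset.univ.inf' Finset.univ_nonempty fun s => ∑ τ, d τ * b τ s) * c0 ^ 2 ≤
      ∑ s, (∑ τ, d τ * b τ s) * (c0 * vmin s) ^ 2) ∧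
    Real.sqrt ((Finset.univ.inf' Finset.univ_nonempty fun s => ∑ τ, d τ * b τ s) / σmin) ≤
      Real.sqrt ((∑ s, (∑ τ, d τ * b τ s) * (c0 * vmin s) ^ 2) /
        (∑ τ, d τ * (∑ s, b τ s * (c0 * vmin s)) ^ 2)) := by
  set p : S → ℝ := fun s => ∑ τ, d τ * b τ s with hp
  set m : ℝ := Finset.univ.inf' Finset.univ_nonempty p with hm
  have hdot : vmin ⬝ᵥ (SigmaH d b).mulVec vmin = σmin := by
    rw [heig]
    simp only [dotProduct, Pi.smul_apply, smul_eq_mul]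
    calc (∑ s, vmin s * (σmin * vmin s)) = σmin * ∑ s, vmin s ^ 2 := by
          rw [Finset.mul_sum]; exact Finset.sum_congr rfl fun s _ => by ring
      _ = σmin := by rw [hunit, mul_one]
  have key : ∑ τ, d τ * (∑ s, b τ s * vmin s) ^ 2 = σmin := by
    rw [← hdot]
    simp only [SigmaH, dotProduct, mulVec, Matrix.of_apply, Finset.mul_sum, Finset.sum_mul, sq]
    rw [Finset.sum_comm]
    refine Finset.sum_congr rfl fun s _ => ?_
    rw [Finset.sum_comm]
    refine Finset.sum_congr rfl fun s2 _ => ?_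
    exact Finset.sum_congr rfl fun t _ => by ring
  have eq1 : ∑ τ, d τ * (∑ s, b τ s * (c0 * vmin s)) ^ 2 = σmin * c0 ^ 2 := by
    have : ∀ τ, (∑ s, b τ s * (c0 * vmin s)) = c0 * ∑ s, b τ s * vmin s := by
      intro τ; rw [Finset.mul_sum]; exact Finset.sum_congr rfl fun s _ => by ring
    calc ∑ τ, d τ * (∑ s, b τ s * (c0 * vmin s)) ^ 2
        = c0 ^ 2 * ∑ τ, d τ * (∑ s, b τ s * vmin s) ^ 2 := by
          rw [Finset.mul_sum]; exact Finset.sum_congr rfl fun τ _ => by rw [this]; ring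
      _ = σmin * c0 ^ 2 := by rw [key]; ring
  have eq2 : m * c0 ^ 2 ≤ ∑ s, p s * (c0 * vmin s) ^ 2 := by
    calc m * c0 ^ 2 = ∑ s, m * (c0 * vmin s) ^ 2 := by
          rw [← Finset.mul_sum]
          have : ∑ s, (c0 * vmin s) ^ 2 = c0 ^ 2 := by
            calc ∑ s, (c0 * vmin s) ^ 2 = c0 ^ 2 * ∑ s, vmin s ^ 2 := by
                  rw [Finset.mul_sum]; exact Finset.sum_congr rfl fun s _ => by ring
              _ = c0 ^ 2 := by rw [hunit, mul_one]
          rw [this]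
      _ ≤ ∑ s, p s * (c0 * vmin s) ^ 2 := by
          apply Finset.sum_le_sum
          intro s _
          exact mul_le_mul_of_nonneg_right (Finset.inf'_le _ (Finset.mem_univ s)) (sq_nonneg _)
  have hσ0 : 0 ≤ σmin := by
    rw [← key]
    exact Finset.sum_nonneg fun τ _ => mul_nonneg (hd0 τ) (sq_nonneg _)
  refine ⟨eq1, eq2, ?_⟩
  rcases eq_or_lt_of_le hσ0 with h0 | hpos
  · rw [← h0]
    simp
  · apply Real.sqrt_le_sqrt
    rw [eq1]
    rw [div_le_div_iff₀ hpos (by positivity)]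
    calc m * (σmin * c0 ^ 2) = (m * c0 ^ 2) * σmin := by ring
      _ ≤ (∑ s, p s * (c0 * vmin s) ^ 2) * σmin := by
          exact mul_le_mul_of_nonneg_right eq2 hσ0
end

section
/- Let d be a probability distribution on a finite set H and, for each τ ∈ H, let b(τ) ∈ ℝ^S have nonnegative entries summing to 1. Let b̄ = Σ_τ d(τ) b(τ) and Σ_H = Σ_τ d(τ) b(τ) b(τ)ᵀ. Then diag(b̄) ⪰ Σ_H in the positive semidefinite order (i.e., xᵀ Σ_H x ≤ xᵀ diag(b̄) x for every x ∈ ℝ^S). Consequently, if every entry of b̄ is positive (so both matrices are invertible), then for every x ∈ ℝ^S, xᵀ diag(b̄)^{-1} x ≤ xᵀ Σ_H^{-1} x; in particular, the L2 belief coverage constant (b̄^e)ᵀ Σ_H^{-1} b̄^e is at least the latent-state coverage quantity Σ_s (b̄^e_s)²/b̄_s = E_{π_b}[(d^{π_e}(s_h)/d^{π_b}(s_h))²]. -/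
open Matrix

private lemma swapSum' {A B : Type} [Fintype A] [Fintype B] (f : A → B → ℝ) :
    ∑ a, ∑ b, f a b = ∑ b, ∑ a, f a b := Finset.sum_comm

/-- Quadratic form of `SigmaH`. -/
private lemma quadSigma {S : Type} [Fintype S] {Hist : Type} [Fintype Hist]
    (d : Hist → ℝ) (b : Hist → S → ℝ) (x : S → ℝ) :
    x ⬝ᵥ (SigmaH d b).mulVec x = ∑ τ, d τ * (∑ s, b τ s * x s) ^ 2 := by
  have hmv : ∀ s, (SigmaH d b).mulVec x s
      = ∑ τ, d τ * b τ s * (∑ s', b τ s' * x s') := by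
    intro s
    calc (SigmaH d b).mulVec x s
        = ∑ s', ∑ τ, d τ * b τ s * b τ s' * x s' := by
          simp [SigmaH, Matrix.mulVec, dotProduct, Finset.sum_mul]
      _ = ∑ τ, ∑ s', d τ * b τ s * b τ s' * x s' :=
          swapSum' (fun s' τ => d τ * b τ s * b τ s' * x s')
      _ = _ := Finset.sum_congr rfl fun τ _ => by
          rw [Finset.mul_sum]; exact Finset.sum_congr rfl fun s' _ => by ring
  calc x ⬝ᵥ (SigmaH d b).mulVec x
      = ∑ s, ∑ τ, x s * (d τ * b τ s * (∑ s', b τ s' * x s')) := by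
        simp only [dotProduct]
        exact Finset.sum_congr rfl fun s _ => by rw [hmv s, Finset.mul_sum]
    _ = ∑ τ, ∑ s, x s * (d τ * b τ s * (∑ s', b τ s' * x s')) :=
        swapSum' _
    _ = ∑ τ, d τ * (∑ s, b τ s * x s) ^ 2 := Finset.sum_congr rfl fun τ _ => by
        calc ∑ s, x s * (d τ * b τ s * (∑ s', b τ s' * x s'))
            = ∑ s, (b τ s * x s) * (d τ * (∑ s', b τ s' * x s')) :=
              Finset.sum_congr rfl fun s _ => by ring
          _ = (∑ s, b τ s * x s) * (d τ * (∑ s', b τ s' * x s')) := by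
              rw [← Finset.sum_mul]
          _ = d τ * (∑ s, b τ s * x s) ^ 2 := by ring

/-- Variational bound: for symmetric PSD invertible `M`,
`2⟨x,y⟩ - yᵀMy ≤ xᵀM⁻¹x`. -/
private lemma quad_key {S : Type} [Fintype S] [DecidableEq S] (M : Matrix S S ℝ)
    (hsym : Mᵀ = M) (hM : IsUnit M.det) (hpsd : ∀ x : S → ℝ, 0 ≤ x ⬝ᵥ M.mulVec x)
    (x y : S → ℝ) :
    2 * (x ⬝ᵥ y) - y ⬝ᵥ M.mulVec y ≤ x ⬝ᵥ M⁻¹.mulVec x := by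
  set z := M⁻¹.mulVec x with hz
  have hMM : M * M⁻¹ = 1 := Matrix.mul_nonsing_inv M hM
  have hMz : M.mulVec z = x := by
    rw [hz, Matrix.mulVec_mulVec, hMM, Matrix.one_mulVec]
  have hzMy : z ⬝ᵥ M.mulVec y = x ⬝ᵥ y := by
    rw [Matrix.dotProduct_mulVec, ← Matrix.mulVec_transpose, hsym, hMz]
  have h := hpsd (y - z)
  have e1 : (y - z) ⬝ᵥ M.mulVec (y - z)
      = y ⬝ᵥ M.mulVec y - x ⬝ᵥ y - (x ⬝ᵥ y - z ⬝ᵥ x) := by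
    rw [Matrix.mulVec_sub, dotProduct_sub, sub_dotProduct,
      sub_dotProduct, hMz, hzMy, dotProduct_comm y x]
  have e2 : z ⬝ᵥ x = x ⬝ᵥ z := dotProduct_comm _ _
  rw [e1, e2] at h
  linarith


/-- belief coverage is stronger than latent-state coverage:
`diag(b̄) ⪰ Σ_H` in the PSD order; consequently, if `b̄ > 0` entrywise (so both matrices are
invertible), then `xᵀ diag(b̄)⁻¹ x ≤ xᵀ Σ_H⁻¹ x` for all `x`; in particular the L2 belief
coverage constant dominates `Σ_s (b̄ᵉ_s)² / b̄_s`, the second moment of the latent-state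
density ratio. -/
theorem stmt18 (Hist S : Type) [Fintype Hist] [Fintype S] [DecidableEq S]
    (d : Hist → ℝ) (hd0 : ∀ τ, 0 ≤ d τ) (hd1 : ∑ τ, d τ = 1)
    (b : Hist → S → ℝ) (hb0 : ∀ τ s, 0 ≤ b τ s) (hb1 : ∀ τ, ∑ s, b τ s = 1) :
    (∀ x : S → ℝ, x ⬝ᵥ (SigmaH d b).mulVec x ≤
      x ⬝ᵥ (Matrix.diagonal (fun s => ∑ τ, d τ * b τ s)).mulVec x) ∧
    ((∀ s, 0 < ∑ τ, d τ * b τ s) → IsUnit (SigmaH d b).det →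
      (∀ x : S → ℝ,
        x ⬝ᵥ ((Matrix.diagonal (fun s => ∑ τ, d τ * b τ s))⁻¹).mulVec x ≤
          x ⬝ᵥ ((SigmaH d b)⁻¹).mulVec x) ∧
      ∀ be : S → ℝ, (∀ s, 0 ≤ be s) → (∑ s, be s = 1) →
        ∑ s, be s ^ 2 / (∑ τ, d τ * b τ s) ≤ be ⬝ᵥ ((SigmaH d b)⁻¹).mulVec be) := by
  set v : S → ℝ := fun s => ∑ τ, d τ * b τ s with hv
  set D : Matrix S S ℝ := Matrix.diagonal v with hD
  -- quadratic form of the diagonal matrix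
  have hQD : ∀ x : S → ℝ, x ⬝ᵥ D.mulVec x = ∑ s, v s * x s ^ 2 := by
    intro x
    simp only [hD, dotProduct, Matrix.mulVec_diagonal]
    exact Finset.sum_congr rfl fun s _ => by ring
  -- Part 1
  have part1 : ∀ x : S → ℝ, x ⬝ᵥ (SigmaH d b).mulVec x ≤ x ⬝ᵥ D.mulVec x := by
    intro x
    rw [quadSigma, hQD]
    have swap : ∑ s, v s * x s ^ 2 = ∑ τ, d τ * ∑ s, b τ s * x s ^ 2 := by
      simp only [hv, Finset.sum_mul]
      rw [swapSum' (fun s τ => d τ * b τ s * x s ^ 2)]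
      exact Finset.sum_congr rfl fun τ _ => by
        rw [Finset.mul_sum]; exact Finset.sum_congr rfl fun s _ => by ring
    rw [swap]
    refine Finset.sum_le_sum fun τ _ => ?_
    refine mul_le_mul_of_nonneg_left ?_ (hd0 τ)
    -- Cauchy-Schwarz : (∑ b x)^2 ≤ (∑ b) * (∑ b x^2) = ∑ b x^2
    have key : (∑ s, b τ s * x s) ^ 2
        ≤ (∑ s, Real.sqrt (b τ s) ^ 2) * (∑ s, (Real.sqrt (b τ s) * x s) ^ 2) := by
      have h := Finset.sum_mul_sq_le_sq_mul_sq Finset.univ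
        (fun s => Real.sqrt (b τ s)) (fun s => Real.sqrt (b τ s) * x s)
      calc (∑ s, b τ s * x s) ^ 2
          = (∑ s, Real.sqrt (b τ s) * (Real.sqrt (b τ s) * x s)) ^ 2 := by
            congr 1
            exact Finset.sum_congr rfl fun s _ => by
              rw [← mul_assoc, Real.mul_self_sqrt (hb0 τ s)]
        _ ≤ _ := h
    have e1 : ∑ s, Real.sqrt (b τ s) ^ 2 = 1 := by
      rw [← hb1 τ]
      exact Finset.sum_congr rfl fun s _ => Real.sq_sqrt (hb0 τ s)
    have e2 : ∑ s, (Real.sqrt (b τ s) * x s) ^ 2 = ∑ s, b τ s * x s ^ 2 := by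
      refine Finset.sum_congr rfl fun s _ => ?_
      rw [mul_pow, Real.sq_sqrt (hb0 τ s)]
    rw [e1, e2, one_mul] at key
    exact key
  refine ⟨part1, fun hvpos hdet => ?_⟩
  -- PSD and symmetry of SigmaH
  have hpsd : ∀ x : S → ℝ, 0 ≤ x ⬝ᵥ (SigmaH d b).mulVec x := by
    intro x
    rw [quadSigma]
    exact Finset.sum_nonneg fun τ _ => mul_nonneg (hd0 τ) (sq_nonneg _)
  have hsym : (SigmaH d b)ᵀ = SigmaH d b := by
    ext s s'
    simp only [Matrix.transpose_apply, SigmaH, Matrix.of_apply]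
    exact Finset.sum_congr rfl fun τ _ => by ring
  -- D is invertible
  have hvne : ∀ s, v s ≠ 0 := fun s => ne_of_gt (hvpos s)
  have hDdet : IsUnit D.det := by
    rw [hD, Matrix.det_diagonal]
    exact isUnit_iff_ne_zero.mpr (Finset.prod_ne_zero_iff.mpr fun s _ => hvne s)
  have hDD : D * D⁻¹ = 1 := Matrix.mul_nonsing_inv D hDdet
  -- Part 2a
  have part2a : ∀ x : S → ℝ,
      x ⬝ᵥ (D⁻¹).mulVec x ≤ x ⬝ᵥ ((SigmaH d b)⁻¹).mulVec x := by
    intro x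
    set y := D⁻¹.mulVec x with hy
    have hDy : D.mulVec y = x := by
      rw [hy, Matrix.mulVec_mulVec, hDD, Matrix.one_mulVec]
    have eyDy : y ⬝ᵥ D.mulVec y = x ⬝ᵥ y := by
      rw [hDy, dotProduct_comm]
    have hk := quad_key (SigmaH d b) hsym hdet hpsd x y
    have hp := part1 y
    have : x ⬝ᵥ D⁻¹.mulVec x = x ⬝ᵥ y := rfl
    rw [this]
    linarith [hp, hk, eyDy]
  refine ⟨part2a, fun be hbe0 hbe1 => ?_⟩
  have hDinv : D⁻¹ = Matrix.diagonal (fun s => (v s)⁻¹) := by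
    apply Matrix.inv_eq_right_inv
    rw [hD, Matrix.diagonal_mul_diagonal, ← Matrix.diagonal_one]
    have hfun : (fun i => v i * (v i)⁻¹) = fun _ : S => (1:ℝ) :=
      funext fun s => mul_inv_cancel₀ (hvne s)
    rw [hfun]
  have : be ⬝ᵥ (D⁻¹).mulVec be = ∑ s, be s ^ 2 / v s := by
    rw [hDinv]
    simp only [dotProduct, Matrix.mulVec_diagonal]
    exact Finset.sum_congr rfl fun s _ => by
      rw [div_eq_mul_inv]; ring
  calc ∑ s, be s ^ 2 / v s = be ⬝ᵥ (D⁻¹).mulVec be := this.symm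
    _ ≤ be ⬝ᵥ ((SigmaH d b)⁻¹).mulVec be := part2a be
end
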